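/- arXiv:1808.09067 — 5 statements merged into one kernel-verified Lean document; each statement's English description precedes it below -/
import Mathlib

section
/- Let f ∈ R be nonzero and lie in the maximal ideal of R. Then ν_A(f) = ν_A(df), and f is ν_A(f)-final dominant if and only if df is ν_A(df)-final dominant. Consequently, for every γ ∈ ℝ, f is γ-final if and only if df is γ-final, with matching type (dominant iff dominant, recessive iff recessive). -/
noncomputable section
open MvPowerSeries Classical

section Core

variable {k : Type} [Field k] {σ : Type}

/-- Weighted value of an exponent. -/
def wtG (W : σ → ℝ) (e : σ →₀ ℕ) : ℝ := e.sum fun i m => (m : ℝ) * W i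

/-- Explicit value of a formal power series. -/
def nuG (W : σ → ℝ) (f : MvPowerSeries σ k) : EReal :=
  sInf {v : EReal | ∃ e : σ →₀ ℕ, MvPowerSeries.coeff e f ≠ 0 ∧ v = ((wtG W e : ℝ) : EReal)}

/-- Derivative operators: `x·∂/∂x` for logarithmic variables, `∂/∂y` for plain ones. -/
def DopG (isLog : σ → Bool) (b : σ) (f : MvPowerSeries σ k) : MvPowerSeries σ k :=
  fun e => if isLog b then (e b : k) * MvPowerSeries.coeff e f
    else ((e b : k) + 1) * MvPowerSeries.coeff (e + Finsupp.single b 1) f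

/-- The differential of a function as a logarithmic 1-form. -/
def dFnG (isLog : σ → Bool) (f : MvPowerSeries σ k) : σ → MvPowerSeries σ k :=
  fun b => DopG isLog b f

/-- Explicit value of a logarithmic 1-form. -/
def nu1G (W : σ → ℝ) (ω : σ → MvPowerSeries σ k) : EReal := ⨅ b, nuG W (ω b)

/-- Wedge of two 1-forms, as an alternating 2-tensor. -/
def w2G (α β : σ → MvPowerSeries σ k) : σ → σ → MvPowerSeries σ k :=
  fun a b => α a * β b - α b * β a

/-- Exterior derivative of a 1-form, as an alternating 2-tensor. -/
def dF1G (isLog : σ → Bool) (ω : σ → MvPowerSeries σ k) : σ → σ → MvPowerSeries σ k :=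
  fun a b => DopG isLog a (ω b) - DopG isLog b (ω a)

/-- Explicit value of a 2-form. -/
def nu2G (W : σ → ℝ) (Ω : σ → σ → MvPowerSeries σ k) : EReal := ⨅ a, ⨅ b, nuG W (Ω a b)

/-- Wedge of a 1-form with a 2-form, as an alternating 3-tensor. -/
def w12G (θ : σ → MvPowerSeries σ k) (Ω : σ → σ → MvPowerSeries σ k) :
    σ → σ → σ → MvPowerSeries σ k :=
  fun a b c => θ a * Ω b c - θ b * Ω a c + θ c * Ω a b

/-- Explicit value of a 3-form. -/
def nu3G (W : σ → ℝ) (T : σ → σ → σ → MvPowerSeries σ k) : EReal :=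
  ⨅ a, ⨅ b, ⨅ c, nuG W (T a b c)

/-- `f` is dominant at its own explicit value: the value is realized by a monomial
purely in the distinguished (`isX`) variables. -/
def DomAtG (W : σ → ℝ) (isX : σ → Prop) (f : MvPowerSeries σ k) : Prop :=
  ∃ e : σ →₀ ℕ, (∀ i, ¬ isX i → e i = 0) ∧ MvPowerSeries.coeff e f ≠ 0 ∧
    ((wtG W e : ℝ) : EReal) = nuG W f

/-- `f` is `γ`-final dominant. -/
def FinalDomFnG (W : σ → ℝ) (isX : σ → Prop) (γ : ℝ) (f : MvPowerSeries σ k) : Prop :=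
  nuG W f ≤ (γ : EReal) ∧ DomAtG W isX f

/-- A 1-form is dominant at its own explicit value: realized by a `dx_i/x_i`-coefficient. -/
def Dom1AtG (W : σ → ℝ) (isX : σ → Prop) (ω : σ → MvPowerSeries σ k) : Prop :=
  ∃ i, isX i ∧ nuG W (ω i) = nu1G W ω ∧ DomAtG W isX (ω i)

/-- A 1-form is `γ`-final dominant. -/
def FinalDom1G (W : σ → ℝ) (isX : σ → Prop) (γ : ℝ) (ω : σ → MvPowerSeries σ k) : Prop :=
  nu1G W ω ≤ (γ : EReal) ∧ Dom1AtG W isX ω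

end Core

abbrev Idx (r n : ℕ) := Sum (Fin r) (Fin n)

/-! The `y`-variables have weight zero, so `∂/∂y_j` moves a monomial of `f` to one of the same
weight, while `x_i ∂/∂x_i` multiplies the coefficient of `x^I y^J` by `i_i`, nonzero in
characteristic zero whenever `x_i` occurs. Hence every nonconstant monomial of `f` survives, with
the same weight, in some coefficient of `df`, and every monomial of `df` comes from one of `f` of
the same weight. In particular a dominant monomial `x^I` of `f` survives in the `dx_i/x_i`
coefficient for any `i` with `i_i ≠ 0`. -/

theorem exists_ne_zero_of_coeff_ne_zero {R σ : Type} [Semiring R] {f : MvPowerSeries σ R}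
    (hm : coeff 0 f = 0) {e : σ →₀ ℕ} (he : coeff e f ≠ 0) : ∃ b, e b ≠ 0 :=
  DFunLike.ne_iff.mp (ne_of_apply_ne (coeff · f) (hm ▸ he))

section ExplicitValue

variable {k : Type} [Field k] {σ : Type} {W : σ → ℝ} {isLog : σ → Bool}

theorem wtG_add (W : σ → ℝ) (a b : σ →₀ ℕ) : wtG W (a + b) = wtG W a + wtG W b :=
  Finsupp.sum_add_index (by simp) (by intros; push_cast; ring)

theorem wtG_add_single_one {b : σ} (hb : W b = 0) (e : σ →₀ ℕ) :
    wtG W (e + Finsupp.single b 1) = wtG W e := by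
  rw [wtG_add]
  simp [wtG, hb]

theorem nuG_le_wtG {f : MvPowerSeries σ k} {e : σ →₀ ℕ} (he : coeff e f ≠ 0) :
    nuG W f ≤ wtG W e :=
  sInf_le ⟨e, he, rfl⟩

theorem le_nuG {f : MvPowerSeries σ k} {c : EReal}
    (h : ∀ e, coeff e f ≠ 0 → c ≤ wtG W e) : c ≤ nuG W f :=
  le_sInf <| by rintro _ ⟨e, he, rfl⟩; exact h e he

theorem coeff_dFnG_of_isLog {b : σ} (hb : isLog b = true) (f : MvPowerSeries σ k)
    (e : σ →₀ ℕ) : coeff e (dFnG isLog f b) = (e b : k) * coeff e f := by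
  simp [dFnG, DopG, hb, coeff_apply]

theorem coeff_dFnG_of_not_isLog {b : σ} (hb : isLog b = false) (f : MvPowerSeries σ k)
    (e : σ →₀ ℕ) :
    coeff e (dFnG isLog f b) = ((e b : k) + 1) * coeff (e + Finsupp.single b 1) f := by
  simp [dFnG, DopG, hb, coeff_apply]

theorem coeff_dFnG_ne_zero_of_isLog [CharZero k] {b : σ} (hb : isLog b = true)
    {f : MvPowerSeries σ k} {e : σ →₀ ℕ} (heb : e b ≠ 0) (he : coeff e f ≠ 0) :
    coeff e (dFnG isLog f b) ≠ 0 := by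
  rw [coeff_dFnG_of_isLog hb]
  exact mul_ne_zero (Nat.cast_ne_zero.mpr heb) he

theorem nuG_le_nu1G_dFnG (hW : ∀ b, isLog b = false → W b = 0) (f : MvPowerSeries σ k) :
    nuG W f ≤ nu1G W (dFnG isLog f) := by
  refine le_iInf fun b => le_nuG fun e he => ?_
  cases hb : isLog b with
  | true =>
    rw [coeff_dFnG_of_isLog hb] at he
    exact nuG_le_wtG (right_ne_zero_of_mul he)
  | false =>
    rw [coeff_dFnG_of_not_isLog hb] at he
    rw [← wtG_add_single_one (hW b hb)]
    exact nuG_le_wtG (right_ne_zero_of_mul he)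

theorem nu1G_dFnG_le_nuG [CharZero k] (hW : ∀ b, isLog b = false → W b = 0)
    {f : MvPowerSeries σ k} (hm : coeff 0 f = 0) :
    nu1G W (dFnG isLog f) ≤ nuG W f := by
  refine le_nuG fun e he => ?_
  obtain ⟨b, heb⟩ := exists_ne_zero_of_coeff_ne_zero hm he
  refine (iInf_le _ b).trans ?_
  cases hb : isLog b with
  | true => exact nuG_le_wtG (coeff_dFnG_ne_zero_of_isLog hb heb he)
  | false =>
    obtain ⟨e', rfl⟩ : ∃ e', e = e' + Finsupp.single b 1 :=
      ⟨e - Finsupp.single b 1, (tsub_add_cancel_of_le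
        (Finsupp.single_le_iff.mpr (Nat.one_le_iff_ne_zero.mpr heb))).symm⟩
    rw [wtG_add_single_one (hW b hb)]
    refine nuG_le_wtG ?_
    rw [coeff_dFnG_of_not_isLog hb]
    exact mul_ne_zero (Nat.cast_add_one_ne_zero _) he

theorem nu1G_dFnG_eq_nuG [CharZero k] (hW : ∀ b, isLog b = false → W b = 0)
    {f : MvPowerSeries σ k} (hm : coeff 0 f = 0) :
    nu1G W (dFnG isLog f) = nuG W f :=
  (nu1G_dFnG_le_nuG hW hm).antisymm (nuG_le_nu1G_dFnG hW f)

theorem domAtG_iff_dom1AtG_dFnG [CharZero k] (hW : ∀ b, isLog b = false → W b = 0)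
    {f : MvPowerSeries σ k} (hm : coeff 0 f = 0) :
    DomAtG W (fun s => isLog s = true) f ↔
      Dom1AtG W (fun s => isLog s = true) (dFnG isLog f) := by
  rw [Dom1AtG, nu1G_dFnG_eq_nuG hW hm]
  constructor
  · rintro ⟨e, hx, he, hval⟩
    obtain ⟨b, heb⟩ := exists_ne_zero_of_coeff_ne_zero hm he
    have hb : isLog b = true := by_contra fun h => heb (hx b h)
    have hdb := coeff_dFnG_ne_zero_of_isLog hb heb he
    have hval' : nuG W (dFnG isLog f b) = wtG W e :=
      (nuG_le_wtG hdb).antisymm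
        (hval ▸ (nuG_le_nu1G_dFnG hW f).trans (iInf_le _ b))
    exact ⟨b, hb, hval'.trans hval, e, hx, hdb, hval'.symm⟩
  · rintro ⟨b, hb, hval, e, hx, he, hval'⟩
    rw [coeff_dFnG_of_isLog hb] at he
    exact ⟨e, hx, right_ne_zero_of_mul he, hval'.trans hval⟩

theorem finalDomFnG_iff_finalDom1G_dFnG [CharZero k] (hW : ∀ b, isLog b = false → W b = 0)
    {f : MvPowerSeries σ k} (hm : coeff 0 f = 0) (γ : ℝ) :
    FinalDomFnG W (fun s => isLog s = true) γ f ↔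
      FinalDom1G W (fun s => isLog s = true) γ (dFnG isLog f) := by
  rw [FinalDomFnG, FinalDom1G, nu1G_dFnG_eq_nuG hW hm, domAtG_iff_dom1AtG_dFnG hW hm]

end ExplicitValue

theorem statement2_general {k : Type} [Field k] [CharZero k] {r n : ℕ}
    (w : Fin r → ℝ)
    (f : MvPowerSeries (Idx r n) k) (hm : MvPowerSeries.coeff 0 f = 0) :
    nuG (Sum.elim w fun _ => (0:ℝ)) f =
      nu1G (Sum.elim w fun _ => (0:ℝ)) (dFnG (fun s => s.isLeft) f) ∧
    (DomAtG (Sum.elim w fun _ => (0:ℝ)) (fun s => s.isLeft = true) f ↔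
      Dom1AtG (Sum.elim w fun _ => (0:ℝ)) (fun s => s.isLeft = true)
        (dFnG (fun s => s.isLeft) f)) ∧
    (∀ γ : ℝ,
      (FinalDomFnG (Sum.elim w fun _ => (0:ℝ)) (fun s => s.isLeft = true) γ f ↔
        FinalDom1G (Sum.elim w fun _ => (0:ℝ)) (fun s => s.isLeft = true) γ
          (dFnG (fun s => s.isLeft) f)) ∧
      ((γ : EReal) < nuG (Sum.elim w fun _ => (0:ℝ)) f ↔
        (γ : EReal) < nu1G (Sum.elim w fun _ => (0:ℝ)) (dFnG (fun s => s.isLeft) f))) := by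
  have hW : ∀ s : Idx r n, s.isLeft = false → Sum.elim w (fun _ => (0:ℝ)) s = 0 := by
    rintro (i | j) h
    · simp at h
    · rfl
  have hν := nu1G_dFnG_eq_nuG hW hm
  exact ⟨hν.symm, domAtG_iff_dom1AtG_dFnG hW hm,
    fun γ => ⟨finalDomFnG_iff_finalDom1G_dFnG hW hm γ, by rw [hν]⟩⟩

/-- for `0 ≠ f` in the maximal ideal, `ν_A(f) = ν_A(df)`, `f` is
`ν_A(f)`-final dominant iff `df` is `ν_A(df)`-final dominant, and for every `γ`,
`f` is `γ`-final iff `df` is, with matching type. -/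
theorem statement2 {k : Type} [Field k] [CharZero k] {r n : ℕ} (hr : 0 < r)
    (w : Fin r → ℝ) (hw : ∀ i, 0 < w i) (hind : LinearIndependent ℚ w)
    (f : MvPowerSeries (Idx r n) k) (hf : f ≠ 0) (hm : MvPowerSeries.coeff 0 f = 0) :
    nuG (Sum.elim w fun _ => (0:ℝ)) f =
      nu1G (Sum.elim w fun _ => (0:ℝ)) (dFnG (fun s => s.isLeft) f) ∧
    (DomAtG (Sum.elim w fun _ => (0:ℝ)) (fun s => s.isLeft = true) f ↔
      Dom1AtG (Sum.elim w fun _ => (0:ℝ)) (fun s => s.isLeft = true)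
        (dFnG (fun s => s.isLeft) f)) ∧
    (∀ γ : ℝ,
      (FinalDomFnG (Sum.elim w fun _ => (0:ℝ)) (fun s => s.isLeft = true) γ f ↔
        FinalDom1G (Sum.elim w fun _ => (0:ℝ)) (fun s => s.isLeft = true) γ
          (dFnG (fun s => s.isLeft) f)) ∧
      ((γ : EReal) < nuG (Sum.elim w fun _ => (0:ℝ)) f ↔
        (γ : EReal) < nu1G (Sum.elim w fun _ => (0:ℝ)) (dFnG (fun s => s.isLeft) f))) :=
  statement2_general w f hm
end
end

section
/- Let ρ ≥ 0, δ > 0 and ε > 0 be real numbers, let h be the smallest integer with h > ρ/δ, and let θ be any real number with 0 < θ ≤ 2ε/((h+1)(h+2)). Then every nonempty positively convex polygon N (with vertices in ℝ_{≥0} × ℤ_{≥0}) such that N is not contained in H⁺_δ(ρ−ε) has a vertex (λ_N(s), s) with λ_N(s) < ρ − sδ and α_N(s) ≥ θ. -/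
set_option maxHeartbeats 4000000

noncomputable section
open Classical

/-- Positive convex hull: convex hull plus the positive quadrant. -/
def posHullSet (S : Set (ℝ × ℝ)) : Set (ℝ × ℝ) :=
  {p | ∃ c ∈ convexHull ℝ S, ∃ d : ℝ × ℝ, 0 ≤ d.1 ∧ 0 ≤ d.2 ∧ p = c + d}

/-- A positively convex polygon: generated by a cloud of points of `ℝ_{≥0} × ℤ_{≥0}`. -/
def PosConvex (N : Set (ℝ × ℝ)) : Prop :=
  ∃ C : Set (ℝ × ℝ), (∀ q ∈ C, 0 ≤ q.1 ∧ ∃ m : ℕ, q.2 = (m : ℝ)) ∧ N = posHullSet C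

/-- Abscissa of the polygon at height `s` (`∞` if the row is empty). -/
def lamN (N : Set (ℝ × ℝ)) (s : ℤ) : EReal :=
  sInf {v : EReal | ∃ l : ℝ, (l, (s : ℝ)) ∈ N ∧ v = (l : EReal)}

/-- Sharpness of the polygon at height `s`:
`α_N(s) = λ_N(s−1) + λ_N(s+1) − 2λ_N(s)`, with the conventions `α_N(s) = 0` when
`λ_N(s) = ∞` and `α_N(s) = ∞` when `λ_N(s) < ∞` and `λ_N(s−1) = ∞`. -/
def sharpN (N : Set (ℝ × ℝ)) (s : ℤ) : EReal :=
  if lamN N s = ⊤ then 0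
  else if lamN N (s - 1) = ⊤ then ⊤
  else lamN N (s - 1) + lamN N (s + 1) - 2 * lamN N s

/-- `ς_δ(N) = inf{a + δ·b : (a,b) ∈ N}`. -/
def sigN (N : Set (ℝ × ℝ)) (δ : ℝ) : EReal :=
  sInf {v : EReal | ∃ p ∈ N, v = ((p.1 + δ * p.2 : ℝ) : EReal)}

/-- `χ_δ(N)`: the ordinate of the highest vertex on the critical line of slope `−1/δ`. -/
def chiN (N : Set (ℝ × ℝ)) (δ : ℝ) : ℕ :=
  sSup {s : ℕ | lamN N (s : ℤ) + ((δ * s : ℝ) : EReal) = sigN N δ}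

/-- every nonempty positively convex polygon that sticks out of
`H⁺_δ(ρ−ε)` has a vertex `(λ_N(s), s)` with `λ_N(s) < ρ − sδ` and `α_N(s) ≥ θ`. -/
theorem statement10 (ρ δ ε θ : ℝ) (hρ : 0 ≤ ρ) (hδ : 0 < δ) (hε : 0 < ε)
    (h : ℕ) (hh : ρ / δ < (h : ℝ)) (hmin : ∀ h' : ℕ, ρ / δ < (h' : ℝ) → h ≤ h')
    (hθ : 0 < θ) (hθ2 : θ ≤ 2 * ε / (((h : ℝ) + 1) * ((h : ℝ) + 2)))
    (N : Set (ℝ × ℝ)) (hN : PosConvex N) (hne : N.Nonempty)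
    (hnot : ¬ N ⊆ {p : ℝ × ℝ | 0 ≤ p.1 ∧ 0 ≤ p.2 ∧ ρ - ε ≤ p.1 + δ * p.2}) :
    ∃ s : ℕ, lamN N (s : ℤ) < ((ρ - s * δ : ℝ) : EReal) ∧ (θ : EReal) ≤ sharpN N (s : ℤ) := by
  obtain ⟨C, hC, hNC⟩ := hN
  -- every point of N has nonnegative coordinates
  have hCpos : C ⊆ Set.Ici (0 : ℝ × ℝ) := by
    intro q hq
    obtain ⟨h1, mq, h2⟩ := hC q hq
    exact ⟨h1, by rw [h2]; positivity⟩
  have hhullpos : convexHull ℝ C ⊆ Set.Ici (0 : ℝ × ℝ) :=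
    convexHull_min hCpos (convex_Ici _)
  have hsub : ∀ p ∈ N, 0 ≤ p.1 ∧ 0 ≤ p.2 := by
    intro p hp
    rw [hNC] at hp
    obtain ⟨c, hc, d, hd1, hd2, rfl⟩ := hp
    have := hhullpos hc
    exact ⟨add_nonneg this.1 hd1, add_nonneg this.2 hd2⟩
  -- upward closure
  have hup : ∀ p ∈ N, ∀ d : ℝ × ℝ, 0 ≤ d.1 → 0 ≤ d.2 → p + d ∈ N := by
    intro p hp d hd1 hd2
    rw [hNC] at hp ⊢
    obtain ⟨c, hc, d0, hd01, hd02, rfl⟩ := hp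
    exact ⟨c, hc, d0 + d, add_nonneg hd01 hd1, add_nonneg hd02 hd2, add_assoc _ _ _⟩
  -- basic lamN facts
  have hle : ∀ (s : ℤ) (x : ℝ), (x, (s : ℝ)) ∈ N → lamN N s ≤ (x : EReal) := by
    intro s x hx
    exact sInf_le ⟨x, hx, rfl⟩
  have hnonneg : ∀ s : ℤ, (0 : EReal) ≤ lamN N s := by
    intro s
    refine le_sInf ?_
    rintro v ⟨l, hl, rfl⟩
    exact_mod_cast (hsub _ hl).1
  have hbot : ∀ s : ℤ, lamN N s ≠ ⊥ :=
    fun s hb => by simpa [hb] using hnonneg s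
  have hmem : ∀ (s : ℤ) (x : ℝ), lamN N s < (x : EReal) → (x, (s : ℝ)) ∈ N := by
    intro s x hx
    obtain ⟨v, ⟨l, hl, rfl⟩, hlt⟩ := sInf_lt_iff.1 hx
    have hlx : l ≤ x := le_of_lt (by exact_mod_cast hlt)
    have := hup _ hl (x - l, 0) (by simpa using sub_nonneg.2 hlx) le_rfl
    simpa using this
  have hmono : ∀ s t : ℤ, s ≤ t → lamN N t ≤ lamN N s := by
    intro s t hst
    refine le_sInf ?_
    rintro v ⟨l, hl, rfl⟩
    refine hle t l ?_
    have := hup _ hl (0, (t : ℝ) - (s : ℝ)) le_rfl (by push_cast; exact_mod_cast sub_nonneg.2 (by exact_mod_cast hst))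
    simpa using this
  have hneg : lamN N (-1) = ⊤ := by
    rw [lamN, sInf_eq_top]
    rintro v ⟨l, hl, rfl⟩
    exfalso
    have h2 : (0:ℝ) ≤ (((-1:ℤ):ℝ)) := (hsub _ hl).2
    norm_num at h2
  -- extract a bad point at an integer height
  rw [Set.not_subset] at hnot
  obtain ⟨p, hpN, hpbad⟩ := hnot
  have hp3 : p.1 + δ * p.2 < ρ - ε := by
    by_contra h3
    exact hpbad ⟨(hsub p hpN).1, (hsub p hpN).2, by linarith⟩
  have hlin : IsLinearMap ℝ (fun w : ℝ × ℝ => w.1 + δ * w.2) :=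
    ⟨fun x y => by simp [Prod.fst_add, Prod.snd_add]; ring,
     fun c x => by simp [Prod.smul_fst, Prod.smul_snd, smul_eq_mul]; ring⟩
  obtain ⟨q, hqC, hq3⟩ : ∃ q ∈ C, q.1 + δ * q.2 < ρ - ε := by
    by_contra hq
    push_neg at hq
    have hhalf : convexHull ℝ C ⊆ {w : ℝ × ℝ | ρ - ε ≤ w.1 + δ * w.2} :=
      convexHull_min (fun w hw => le_of_not_gt fun hlt => absurd hlt (not_lt.2 (hq w hw))) (convex_halfSpace_ge hlin (ρ - ε))
    have hp' := hpN
    rw [hNC] at hp'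
    obtain ⟨c, hc, d, hd1, hd2, rfl⟩ := hp'
    have h1 : ρ - ε ≤ c.1 + δ * c.2 := hhalf hc
    have : (c + d).1 + δ * (c + d).2 = (c.1 + δ * c.2) + (d.1 + δ * d.2) := by
      simp [Prod.fst_add, Prod.snd_add]; ring
    nlinarith [mul_nonneg (le_of_lt hδ) hd2]
  obtain ⟨hq1, m, hqm⟩ := hC q hqC
  have hqN : q ∈ N := by
    rw [hNC]
    exact ⟨q, subset_convexHull ℝ C hqC, (0, 0), le_rfl, le_rfl, by simp⟩
  have hlam_m : lamN N (m : ℤ) ≤ (q.1 : EReal) := by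
    refine hle _ _ ?_
    have : (q.1, ((m : ℤ) : ℝ)) = q := by
      rw [show ((m : ℤ) : ℝ) = (m : ℝ) by push_cast; ring, ← hqm]
    rwa [this]
  have hq3' : q.1 < ρ - ε - δ * m := by rw [hqm] at hq3; linarith
  have hm_lt_h : m < h := by
    have h1 : δ * (m : ℝ) < ρ := by nlinarith
    have h2 : (m : ℝ) < ρ / δ := by rw [lt_div_iff₀ hδ]; linarith
    exact_mod_cast lt_trans h2 hh
  by_contra hcon
  push_neg at hcon
  set P : ℤ → Prop := fun s => lamN N s < ((ρ - (s : ℝ) * δ : ℝ) : EReal) with hPdef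
  have hsharp : ∀ s : ℤ, 0 ≤ s → P s → sharpN N s < (θ : EReal) := by
    intro s hs hPs
    obtain ⟨n, rfl⟩ := Int.eq_ofNat_of_zero_le hs
    refine hcon n ?_
    have : ((ρ - ((n : ℤ) : ℝ) * δ : ℝ) : EReal) = ((ρ - (n : ℝ) * δ : ℝ) : EReal) := by
      push_cast; ring_nf
    rw [hPdef] at hPs
    simpa [this] using hPs
  have hPtop : ∀ s : ℤ, P s → lamN N s ≠ ⊤ := fun s hs => ne_top_of_lt hs
  have hprev : ∀ s : ℤ, 0 ≤ s → P s → lamN N (s - 1) ≠ ⊤ := by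
    intro s hs hPs htop
    have h1 := hsharp s hs hPs
    rw [sharpN, if_neg (hPtop s hPs), if_pos htop] at h1
    exact not_top_lt h1
  have hP0 : ¬ P 0 := fun h0 => hprev 0 le_rfl h0 (by norm_num [hneg])
  have hPm : P (m : ℤ) := by
    have hq4 : q.1 < ρ - ((m : ℤ) : ℝ) * δ := by push_cast; linarith
    exact lt_of_le_of_lt hlam_m (by exact_mod_cast hq4)
  have hPh : ¬ P (h : ℤ) := by
    intro hPh
    have hlt : ρ - ((h : ℤ) : ℝ) * δ ≤ 0 := by
      have := (div_lt_iff₀ hδ).1 hh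
      push_cast; nlinarith
    have h2 : (0 : EReal) < ((ρ - ((h : ℤ) : ℝ) * δ : ℝ) : EReal) :=
      lt_of_le_of_lt (hnonneg _) hPh
    have h3 : (0 : ℝ) < ρ - ((h : ℤ) : ℝ) * δ := by exact_mod_cast h2
    linarith
  letI : DecidablePred fun j : ℕ => ¬ P (j : ℤ) := fun _ => Classical.propDecidable _
  set a : ℕ := Nat.findGreatest (fun j : ℕ => ¬ P (j : ℤ)) m with hadef
  have hP00 : ¬ P ((0 : ℕ) : ℤ) := by simpa using hP0
  have haP : ¬ P (a : ℤ) :=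
    Nat.findGreatest_spec (P := fun j : ℕ => ¬ P (j : ℤ)) (Nat.zero_le m) hP00
  have ham : a ≤ m := Nat.findGreatest_le m
  have hmaxP : ∀ j : ℕ, a < j → j ≤ m → P (j : ℤ) :=
    fun j h1 h2 => not_not.mp (Nat.findGreatest_is_greatest h1 h2)
  have ham' : a < m := lt_of_le_of_ne ham (fun he => haP (he ▸ hPm))
  have hbex : ∃ k : ℕ, ¬ P ((m + k : ℕ) : ℤ) := by
    refine ⟨h - m, ?_⟩
    have he : m + (h - m) = h := by omega
    rw [he]; exact hPh
  set bk := Nat.find hbex with hbkdef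
  set b := m + bk with hbdef
  have hbP : ¬ P (b : ℤ) := Nat.find_spec hbex
  have hminP : ∀ j : ℕ, m ≤ j → j < b → P (j : ℤ) := by
    intro j h1 h2
    have h3 := Nat.find_min hbex (show j - m < bk by omega)
    have he : m + (j - m) = j := by omega
    rw [he] at h3
    exact not_not.mp h3
  have hbh : b ≤ h := by
    have h4 : ¬ P ((m + (h - m) : ℕ) : ℤ) := by
      have he : m + (h - m) = h := by omega
      rw [he]; exact hPh
    have := Nat.find_min' hbex h4
    omega
  have hmb : m < b := by
    rcases Nat.eq_zero_or_pos bk with h0 | h0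
    · exfalso
      apply hbP
      have : b = m := by omega
      rw [this]; exact hPm
    · omega
  have hPmid : ∀ j : ℤ, (a : ℤ) < j → j < (b : ℤ) → P j := by
    intro j h1 h2
    have hj0 : 0 ≤ j := by omega
    lift j to ℕ using hj0 with n
    rcases le_or_gt n m with hc | hc
    · exact hmaxP n (by exact_mod_cast h1) hc
    · exact hminP n hc.le (by exact_mod_cast h2)
  have hfinA : lamN N (a : ℤ) ≠ ⊤ := by
    intro htop
    have h1 : P ((a : ℤ) + 1) := hPmid _ (by omega) (by
      have : (a : ℤ) + 1 ≤ (m : ℤ) := by exact_mod_cast ham'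
      have : (m : ℤ) < (b : ℤ) := by exact_mod_cast hmb
      omega)
    exact hprev ((a : ℤ) + 1) (by omega) h1 (by simpa using htop)
  have hfin : ∀ j : ℤ, (a : ℤ) ≤ j → lamN N j ≠ ⊤ :=
    fun j hj htop => hfinA (top_le_iff.1 (htop ▸ hmono (a : ℤ) j hj))
  set r : ℤ → ℝ := fun j => (lamN N j).toReal with hrdef
  have hcoe : ∀ j : ℤ, (a : ℤ) ≤ j → lamN N j = ((r j : ℝ) : EReal) :=
    fun j hj => (EReal.coe_toReal (hfin j hj) (hbot j)).symm
  have hamZ : (a : ℤ) < (m : ℤ) := by exact_mod_cast ham'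
  have hmbZ : (m : ℤ) < (b : ℤ) := by exact_mod_cast hmb
  -- endpoint facts
  have hra : ρ - ((a : ℤ) : ℝ) * δ ≤ r (a : ℤ) := by
    have h1 := not_lt.1 haP
    rw [hcoe _ le_rfl] at h1
    exact_mod_cast h1
  have hrb : ρ - ((b : ℤ) : ℝ) * δ ≤ r (b : ℤ) := by
    have h1 := not_lt.1 hbP
    rw [hcoe _ (by omega)] at h1
    exact_mod_cast h1
  have hrs : r (m : ℤ) < ρ - ε - δ * m := by
    have h1 := hlam_m
    rw [hcoe _ (by omega)] at h1
    have : r (m : ℤ) ≤ q.1 := by exact_mod_cast h1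
    linarith
  -- sharpness bound in real form
  have hαlt : ∀ j : ℤ, (a : ℤ) < j → j < (b : ℤ) → r (j - 1) + r (j + 1) - 2 * r j < θ := by
    intro j h1 h2
    have hPj := hPmid j h1 h2
    have hs := hsharp j (by omega) hPj
    rw [sharpN, if_neg (hfin j (by omega)), if_neg (hfin (j - 1) (by omega)),
      hcoe (j - 1) (by omega), hcoe (j + 1) (by omega), hcoe j (by omega)] at hs
    have hco : ((r (j - 1) + r (j + 1) - 2 * r j : ℝ) : EReal)
        = ((r (j - 1) : ℝ) : EReal) + ((r (j + 1) : ℝ) : EReal) - 2 * ((r j : ℝ) : EReal) := by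
      norm_cast
    rw [← hco] at hs
    exact_mod_cast hs
  have hstep : ∀ j : ℤ, (a : ℤ) < j → j < (b : ℤ) → r (j - 1) - r j ≤ (r j - r (j + 1)) + θ :=
    fun j h1 h2 => by linarith [hαlt j h1 h2]
  -- telescoping bounds, left side
  have Dleft : ∀ j : ℤ, j ≤ (m : ℤ) → ((a : ℤ) + 1 ≤ j →
      r (j - 1) - r j ≤ (r ((m : ℤ) - 1) - r (m : ℤ)) + (((m : ℤ) - j : ℤ) : ℝ) * θ) := by
    refine Int.le_induction_down ?_ ?_
    · intro _; simp
    · intro n hn ih h1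
      have h2 := ih (by omega)
      have h3 := hstep (n - 1) (by omega) (by omega)
      have he : n - 1 + 1 = n := by ring
      rw [he] at h3
      push_cast at h2 ⊢
      linarith
  have Lleft : ∀ j : ℤ, j ≤ (m : ℤ) → ((a : ℤ) ≤ j →
      r j - r (m : ℤ) ≤ (((m : ℤ) - j : ℤ) : ℝ) * (r ((m : ℤ) - 1) - r (m : ℤ))
        + θ * (((m : ℤ) - j : ℤ) : ℝ) * ((((m : ℤ) - j : ℤ) : ℝ) - 1) / 2) := by
    refine Int.le_induction_down ?_ ?_
    · intro _; simp
    · intro n hn ih h1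
      have h2 := ih (by omega)
      have h3 := Dleft n hn (by omega)
      push_cast at h2 h3 ⊢
      nlinarith [h2, h3]
  -- telescoping bounds, right side
  have Dright : ∀ j : ℤ, (m : ℤ) + 1 ≤ j → (j ≤ (b : ℤ) →
      (r (m : ℤ) - r ((m : ℤ) + 1)) - ((j - (m : ℤ) - 1 : ℤ) : ℝ) * θ ≤ r (j - 1) - r j) := by
    refine Int.le_induction ?_ ?_
    · intro _
      have he : (m : ℤ) + 1 - 1 = (m : ℤ) := by ring
      rw [he]; push_cast; norm_num
    · intro n hn ih h1
      have h2 := ih (by omega)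
      have h3 := hstep n (by omega) (by omega)
      have he : n + 1 - 1 = n := by ring
      rw [he]
      push_cast at h2 ⊢
      linarith
  have Rright : ∀ j : ℤ, (m : ℤ) ≤ j → (j ≤ (b : ℤ) →
      ((j - (m : ℤ) : ℤ) : ℝ) * (r (m : ℤ) - r ((m : ℤ) + 1))
        - θ * ((j - (m : ℤ) : ℤ) : ℝ) * (((j - (m : ℤ) : ℤ) : ℝ) - 1) / 2 ≤ r (m : ℤ) - r j) := by
    refine Int.le_induction ?_ ?_
    · intro _; simp
    · intro n hn ih h1
      have h2 := ih (by omega)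
      have h3 := Dright (n + 1) (by omega) h1
      have he : n + 1 - 1 = n := by ring
      rw [he] at h3
      push_cast at h2 h3 ⊢
      nlinarith [h2, h3]
  -- collect the final inequalities
  have L := Lleft (a : ℤ) (by omega) le_rfl
  have R := Rright (b : ℤ) (by omega) le_rfl
  have E := hαlt (m : ℤ) hamZ hmbZ
  set Ds := r ((m : ℤ) - 1) - r (m : ℤ) with hDs
  set Ds' := r (m : ℤ) - r ((m : ℤ) + 1) with hDs'
  have key3 : Ds < Ds' + θ := by rw [hDs, hDs']; linarith [E]
  push_cast at L R hra hrb
  have hm1 : ((a:ℝ)) + 1 ≤ (m:ℝ) := by exact_mod_cast ham'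
  have hm2 : ((m:ℝ)) + 1 ≤ (b:ℝ) := by exact_mod_cast hmb
  have h2b : ((b:ℝ)) ≤ (h:ℝ) := by exact_mod_cast hbh
  have h0a : (0:ℝ) ≤ (a:ℝ) := Nat.cast_nonneg a
  have hP0 : (0:ℝ) < (m:ℝ) - (a:ℝ) := by linarith
  have hQ0 : (0:ℝ) < (b:ℝ) - (m:ℝ) := by linarith
  have key1 : δ * ((m:ℝ) - a) + ε < ((m:ℝ) - a) * Ds
      + θ * ((m:ℝ) - a) * (((m:ℝ) - a) - 1) / 2 := by nlinarith [L, hra, hrs]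
  have key2 : ((b:ℝ) - m) * Ds' - θ * ((b:ℝ) - m) * (((b:ℝ) - m) - 1) / 2
      < δ * ((b:ℝ) - m) - ε := by nlinarith [R, hrb, hrs]
  have key4 : ε * (((m:ℝ) - a) + ((b:ℝ) - m))
      < θ * ((m:ℝ) - a) * ((b:ℝ) - m) * (((m:ℝ) - a) + ((b:ℝ) - m)) / 2 := by
    nlinarith [mul_lt_mul_of_pos_left key1 hQ0, mul_lt_mul_of_pos_left key2 hP0,
      mul_lt_mul_of_pos_right key3 (mul_pos hP0 hQ0)]
  have key5 : 2 * ε < θ * (((m:ℝ) - a) * ((b:ℝ) - m)) := by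
    nlinarith [key4, hP0, hQ0]
  have hPQ : ((m:ℝ) - a) + ((b:ℝ) - m) ≤ (h:ℝ) := by linarith
  have h5 : θ * ((((m:ℝ) - a) + ((b:ℝ) - m)) ^ 2) ≤ θ * ((h:ℝ) ^ 2) :=
    mul_le_mul_of_nonneg_left
      (pow_le_pow_left₀ (by linarith : (0:ℝ) ≤ ((m:ℝ) - a) + ((b:ℝ) - m)) hPQ 2) hθ.le
  have h7 : θ * (((h : ℝ) + 1) * ((h : ℝ) + 2)) ≤ 2 * ε := by
    have hpos : (0:ℝ) < ((h : ℝ) + 1) * ((h : ℝ) + 2) := by positivity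
    exact (le_div_iff₀ hpos).1 hθ2
  have h8 : (0:ℝ) < θ * ((3/4) * (h:ℝ)^2 + 3 * (h:ℝ) + 2) := by positivity
  nlinarith [key5, h5, h7, h8, mul_nonneg hθ.le (sq_nonneg (((m:ℝ) - a) - ((b:ℝ) - m)))]
end
end

section
/- Let N and N′ be nonempty positively convex polygons (with vertices in ℝ_{≥0} × ℤ_{≥0}) and let δ₀ > 0. The following are equivalent: (1) ς_δ(N) = ς_δ(N′) for every δ with 0 < δ ≤ δ₀; (2) χ_{δ₀}(N) = χ_{δ₀}(N′) and λ_N(s) = λ_{N′}(s) for every s ≥ χ_{δ₀}(N). -/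
noncomputable section
open Classical

/-!
Everything is read off the sequence `λ = λ_N`, which is nonincreasing and convex, with
`ς_δ(N) = min_s (λ(s) + δ s)`. Lowering `δ` can only raise the highest minimiser, so
`χ_δ(N) ≥ χ_{δ₀}(N)` for `δ ≤ δ₀`, which gives (2) ⇒ (1).

Conversely, for `s ≥ χ_{δ₀}(N)` the slope `d = λ(s) - λ(s+1)` is `< δ₀`, and the line through
`(λ(s), s)` and `(λ(s+1), s+1)` supports the polygon, so `ς_δ(N) ≥ λ(s) + d s` for `d ≤ δ ≤ δ₀`.
Letting `δ ↓ d` gives `λ_N(s) = sup_{0<δ≤δ₀} (ς_δ(N) - δ s)`, which only depends on the `ς_δ`.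
Hence the two sequences agree above both `χ`'s, and this forces `χ_{δ₀}(N) = χ_{δ₀}(N')`.
-/

open Pointwise Filter Topology

lemma posHullSet_eq (S : Set (ℝ × ℝ)) : posHullSet S = convexHull ℝ S + Set.Ici 0 := by
  ext p
  constructor
  · rintro ⟨c, hc, d, h₁, h₂, rfl⟩
    exact ⟨c, hc, d, ⟨h₁, h₂⟩, rfl⟩
  · rintro ⟨c, hc, d, hd, rfl⟩
    exact ⟨c, hc, d, hd.1, hd.2, rfl⟩

lemma subset_posHullSet (S : Set (ℝ × ℝ)) : S ⊆ posHullSet S :=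
  fun q hq => ⟨q, subset_convexHull ℝ S hq, 0, le_rfl, le_rfl, (add_zero q).symm⟩

lemma posHullSet_subset {S H : Set (ℝ × ℝ)} (hH : Convex ℝ H) (hSH : S ⊆ H)
    (hup : ∀ p ∈ H, ∀ d : ℝ × ℝ, 0 ≤ d → p + d ∈ H) : posHullSet S ⊆ H := by
  rintro _ ⟨c, hc, d, h₁, h₂, rfl⟩
  exact hup c (convexHull_min hSH hH hc) d ⟨h₁, h₂⟩

namespace PosConvex

variable {N : Set (ℝ × ℝ)}

lemma convex (hN : PosConvex N) : Convex ℝ N := by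
  obtain ⟨C, -, rfl⟩ := hN
  rw [posHullSet_eq]
  exact (convex_convexHull ℝ C).add (convex_Ici 0)

lemma add_mem (hN : PosConvex N) {p d : ℝ × ℝ} (hp : p ∈ N) (hd : 0 ≤ d) : p + d ∈ N := by
  obtain ⟨C, -, rfl⟩ := hN
  rw [posHullSet_eq] at hp ⊢
  obtain ⟨c, hc, e, he, rfl⟩ := hp
  exact ⟨c, hc, e + d, add_nonneg he hd, (add_assoc c e d).symm⟩

lemma nonneg (hN : PosConvex N) {p : ℝ × ℝ} (hp : p ∈ N) : 0 ≤ p := by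
  obtain ⟨C, hC, rfl⟩ := hN
  refine posHullSet_subset (convex_Ici 0) (fun q hq => ?_) (fun p hp d hd => add_nonneg hp hd) hp
  obtain ⟨h₁, m, hm⟩ := hC q hq
  exact ⟨h₁, hm ▸ m.cast_nonneg⟩

end PosConvex

section rows

variable {N : Set (ℝ × ℝ)}

lemma lamN_le {l : ℝ} {s : ℤ} (h : (l, (s : ℝ)) ∈ N) : lamN N s ≤ l :=
  sInf_le ⟨l, h, rfl⟩

lemma lamN_natCast_le {q : ℝ × ℝ} {m : ℕ} (hq : q ∈ N) (hm : q.2 = m) : lamN N m ≤ q.1 :=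
  lamN_le (by rwa [Int.cast_natCast, ← hm])

lemma exists_mem_lt_of_lamN_lt {s : ℤ} {z : ℝ} (h : lamN N s < z) :
    ∃ l : ℝ, (l, (s : ℝ)) ∈ N ∧ l < z := by
  obtain ⟨_, ⟨l, hl, rfl⟩, hlz⟩ := sInf_lt_iff.mp h
  exact ⟨l, hl, EReal.coe_lt_coe_iff.mp hlz⟩

namespace PosConvex

lemma lamN_nonneg (hN : PosConvex N) (s : ℤ) : 0 ≤ lamN N s :=
  le_sInf fun _ ⟨_, hl, hv⟩ => hv ▸ EReal.coe_nonneg.mpr (hN.nonneg hl).1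

lemma exists_lamN_eq (hN : PosConvex N) {s : ℤ} (h : lamN N s ≠ ⊤) : ∃ ℓ : ℝ, lamN N s = ℓ :=
  ⟨_, (EReal.coe_toReal h (ne_bot_of_le_ne_bot EReal.zero_ne_bot (hN.lamN_nonneg s))).symm⟩

lemma lamN_antitone (hN : PosConvex N) : Antitone (lamN N) := by
  intro s t hst
  refine le_sInf fun _ ⟨l, hl, hv⟩ => hv ▸ lamN_le ?_
  have hd : (0 : ℝ × ℝ) ≤ ((0 : ℝ), ((t - s : ℤ) : ℝ)) := ⟨le_refl (0 : ℝ), by simpa using hst⟩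
  simpa using hN.add_mem hl hd

lemma lamN_le_convexComb (hN : PosConvex N) {a b m : ℤ} {θ : ℝ} (hθ₀ : 0 ≤ θ) (hθ₁ : θ ≤ 1)
    (hm : (m : ℝ) = θ * a + (1 - θ) * b) {x y : ℝ} (hx : lamN N a = x) (hy : lamN N b = y) :
    lamN N m ≤ ((θ * x + (1 - θ) * y : ℝ) : EReal) := by
  refine EReal.le_of_forall_lt_iff_le.mp fun z hz => ?_
  set ε := z - (θ * x + (1 - θ) * y)
  have hε : 0 < ε := sub_pos.mpr (EReal.coe_lt_coe_iff.mp hz)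
  obtain ⟨x', hx'N, hx'⟩ := exists_mem_lt_of_lamN_lt (z := x + ε)
    (by rw [hx]; exact EReal.coe_lt_coe_iff.mpr (by linarith))
  obtain ⟨y', hy'N, hy'⟩ := exists_mem_lt_of_lamN_lt (z := y + ε)
    (by rw [hy]; exact EReal.coe_lt_coe_iff.mpr (by linarith))
  have hmem : (θ * x' + (1 - θ) * y', (m : ℝ)) ∈ N := by
    convert hN.convex hx'N hy'N hθ₀ (sub_nonneg.mpr hθ₁) (by ring) using 1
    ext <;> simp [hm]
  refine (lamN_le hmem).trans (EReal.coe_le_coe_iff.mpr ?_)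
  nlinarith [mul_le_mul_of_nonneg_left hx'.le hθ₀,
    mul_le_mul_of_nonneg_left hy'.le (sub_nonneg.mpr hθ₁)]

lemma le_lamN_of_slope (hN : PosConvex N) {s : ℤ} {ℓ ℓ₁ : ℝ} (hℓ : lamN N s = ℓ)
    (hℓ₁ : lamN N (s + 1) = ℓ₁) (t : ℤ) :
    ((ℓ + (ℓ - ℓ₁) * (s - t) : ℝ) : EReal) ≤ lamN N t := by
  rcases eq_or_ne (lamN N t) ⊤ with ht | ht
  · exact ht ▸ le_top
  obtain ⟨y, hy⟩ := hN.exists_lamN_eq ht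
  rw [hy, EReal.coe_le_coe_iff]
  rcases le_or_gt t s with hts | hst
  · have hlen : (1 : ℝ) ≤ s + 1 - t := by
      have : (t : ℝ) ≤ s := by exact_mod_cast hts
      linarith
    have h := hN.lamN_le_convexComb (a := t) (b := s + 1) (m := s) (θ := 1 / (s + 1 - t))
      (by positivity) (by rw [div_le_one (by linarith)]; exact hlen)
      (by push_cast; field_simp; ring) hy hℓ₁
    rw [hℓ, EReal.coe_le_coe_iff] at h
    have key : (s + 1 - t) * ℓ ≤ y + (s - t) * ℓ₁ :=
      calc (s + 1 - t) * ℓ ≤ (s + 1 - t) * (1 / (s + 1 - t) * y + (1 - 1 / (s + 1 - t)) * ℓ₁) :=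
            mul_le_mul_of_nonneg_left h (by linarith)
        _ = y + (s - t) * ℓ₁ := by field_simp; ring
    linarith
  · have hlen : (1 : ℝ) ≤ t - s := by
      have : (s : ℝ) + 1 ≤ t := by exact_mod_cast hst
      linarith
    have h := hN.lamN_le_convexComb (a := s) (b := t) (m := s + 1) (θ := 1 - 1 / (t - s))
      (by rw [sub_nonneg, div_le_one (by linarith)]; exact hlen)
      (by have : 0 ≤ 1 / ((t : ℝ) - s) := by positivity
          linarith)
      (by push_cast; field_simp; ring) hℓ hy
    rw [hℓ₁, EReal.coe_le_coe_iff] at h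
    have key : (t - s) * ℓ₁ ≤ (t - s - 1) * ℓ + y :=
      calc (t - s) * ℓ₁ ≤ (t - s) * ((1 - 1 / (t - s)) * ℓ + (1 - (1 - 1 / (t - s))) * y) :=
            mul_le_mul_of_nonneg_left h (by linarith)
        _ = (t - s - 1) * ℓ + y := by field_simp; ring
    linarith

end PosConvex

end rows

section critical

variable {N N' : Set (ℝ × ℝ)} {δ δ₀ : ℝ}

lemma sigN_le_lamN_add (N : Set (ℝ × ℝ)) (δ : ℝ) (t : ℕ) :
    sigN N δ ≤ lamN N t + ((δ * t : ℝ) : EReal) := by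
  rw [← EReal.sub_le_iff_le_add (.inl (EReal.coe_ne_bot _)) (.inl (EReal.coe_ne_top _))]
  refine le_sInf fun _ ⟨l, hl, hv⟩ => hv ▸ ?_
  rw [EReal.sub_le_iff_le_add (.inl (EReal.coe_ne_bot _)) (.inl (EReal.coe_ne_top _)),
    ← EReal.coe_add]
  exact sInf_le ⟨(l, t), hl, by simp⟩

namespace PosConvex

lemma le_sigN (hN : PosConvex N) (hδ : 0 ≤ δ) {x : EReal}
    (hx : ∀ t : ℕ, x ≤ lamN N t + ((δ * t : ℝ) : EReal)) : x ≤ sigN N δ := by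
  refine EReal.ge_of_forall_gt_iff_ge.mp fun c hc => le_sInf fun _ ⟨p, hp, hv⟩ => hv ▸ ?_
  obtain ⟨C, hC, rfl⟩ := hN
  refine EReal.coe_le_coe_iff.mpr
    (posHullSet_subset (H := {q | c ≤ q.1 + δ * q.2}) ?_ (fun q hq => ?_) (fun q hq d hd => ?_) hp)
  · exact convex_halfSpace_ge (LinearMap.fst ℝ ℝ ℝ + δ • LinearMap.snd ℝ ℝ ℝ).isLinear c
  · obtain ⟨-, m, hm⟩ := hC q hq
    have hrow := lamN_natCast_le (subset_posHullSet C hq) hm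
    have : (c : EReal) ≤ ((q.1 + δ * m : ℝ) : EReal) :=
      hc.le.trans ((hx m).trans (by rw [EReal.coe_add]; exact add_le_add hrow le_rfl))
    show c ≤ q.1 + δ * q.2
    rw [hm]
    exact EReal.coe_le_coe_iff.mp this
  · have : 0 ≤ d.1 + δ * d.2 := add_nonneg hd.1 (mul_nonneg hδ hd.2)
    show c ≤ (q + d).1 + δ * (q + d).2
    simp only [Prod.fst_add, Prod.snd_add]
    linarith [show c ≤ q.1 + δ * q.2 from hq]

lemma exists_lamN_ne_top (hN : PosConvex N) (hne : N.Nonempty) : ∃ s : ℕ, lamN N s ≠ ⊤ := by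
  obtain ⟨C, hC, rfl⟩ := hN
  obtain ⟨_, c, hc, -⟩ := hne
  obtain ⟨q, hq⟩ := (convexHull_nonempty_iff (𝕜 := ℝ)).mp ⟨c, hc⟩
  obtain ⟨-, m, hm⟩ := hC q hq
  exact ⟨m, ne_top_of_le_ne_top (EReal.coe_ne_top q.1)
    (lamN_natCast_le (subset_posHullSet C hq) hm)⟩

lemma sigN_ne_top (hN : PosConvex N) (hne : N.Nonempty) : sigN N δ ≠ ⊤ := by
  obtain ⟨s, hs⟩ := hN.exists_lamN_ne_top hne
  exact ne_top_of_le_ne_top (EReal.add_ne_top hs (EReal.coe_ne_top _)) (sigN_le_lamN_add N δ s)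

lemma bddAbove_sublevel (hN : PosConvex N) (hδ : 0 < δ) {x : EReal} (hx : x ≠ ⊤) :
    BddAbove {t : ℕ | lamN N t + ((δ * t : ℝ) : EReal) ≤ x} := by
  refine ⟨⌊x.toReal / δ⌋₊, fun t ht => Nat.le_floor ?_⟩
  rw [le_div_iff₀ hδ, mul_comm]
  have : ((δ * t : ℝ) : EReal) ≤ x.toReal :=
    (le_add_of_nonneg_left (hN.lamN_nonneg t)).trans (ht.trans (EReal.le_coe_toReal hx))
  exact EReal.coe_le_coe_iff.mp this

lemma exists_forall_lamN_add_le (hN : PosConvex N) (hne : N.Nonempty) (hδ : 0 < δ) :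
    ∃ s : ℕ, ∀ t : ℕ,
      lamN N s + ((δ * s : ℝ) : EReal) ≤ lamN N t + ((δ * t : ℝ) : EReal) := by
  set f : ℕ → EReal := fun t => lamN N t + ((δ * t : ℝ) : EReal)
  obtain ⟨s₀, hs₀⟩ := hN.exists_lamN_ne_top hne
  have hfin : {t | f t ≤ f s₀}.Finite :=
    (hN.bddAbove_sublevel hδ (EReal.add_ne_top hs₀ (EReal.coe_ne_top _))).finite
  obtain ⟨s, hs, hmin⟩ := Set.exists_min_image _ f hfin ⟨s₀, le_refl (f s₀)⟩
  exact ⟨s, fun t => (le_total (f t) (f s₀)).elim (hmin t) hs.trans⟩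

lemma bddAbove_argmin (hN : PosConvex N) (hne : N.Nonempty) (hδ : 0 < δ) :
    BddAbove {t : ℕ | lamN N t + ((δ * t : ℝ) : EReal) = sigN N δ} :=
  (hN.bddAbove_sublevel hδ (hN.sigN_ne_top hne)).mono fun _ ht => ht.le

lemma lamN_chiN_add (hN : PosConvex N) (hne : N.Nonempty) (hδ : 0 < δ) :
    lamN N (chiN N δ) + ((δ * chiN N δ : ℝ) : EReal) = sigN N δ := by
  obtain ⟨s, hs⟩ := hN.exists_forall_lamN_add_le hne hδ
  have hmem : s ∈ {t : ℕ | lamN N t + ((δ * t : ℝ) : EReal) = sigN N δ} :=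
    le_antisymm (hN.le_sigN hδ.le hs) (sigN_le_lamN_add N δ s)
  exact Nat.sSup_mem ⟨s, hmem⟩ (hN.bddAbove_argmin hne hδ)

lemma le_chiN (hN : PosConvex N) (hne : N.Nonempty) (hδ : 0 < δ) {t : ℕ}
    (ht : lamN N t + ((δ * t : ℝ) : EReal) = sigN N δ) : t ≤ chiN N δ :=
  le_csSup (hN.bddAbove_argmin hne hδ) ht

lemma lamN_chiN_ne_top (hN : PosConvex N) (hne : N.Nonempty) (hδ : 0 < δ) :
    lamN N (chiN N δ) ≠ ⊤ := fun h => hN.sigN_ne_top hne <| by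
  rw [← hN.lamN_chiN_add hne hδ, h, EReal.top_add_of_ne_bot (EReal.coe_ne_bot _)]

lemma sigN_lt_of_chiN_lt (hN : PosConvex N) (hne : N.Nonempty) (hδ : 0 < δ) {t : ℕ}
    (ht : chiN N δ < t) : sigN N δ < lamN N t + ((δ * t : ℝ) : EReal) :=
  (sigN_le_lamN_add N δ t).lt_of_ne fun h => ht.not_ge (hN.le_chiN hne hδ h.symm)

lemma chiN_le_chiN (hN : PosConvex N) (hne : N.Nonempty) (hδ : 0 < δ) (hδδ₀ : δ ≤ δ₀) :
    chiN N δ₀ ≤ chiN N δ := by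
  set χ := chiN N δ₀
  set t := chiN N δ
  by_contra! htχ
  refine htχ.not_ge (hN.le_chiN hne hδ (le_antisymm ?_ (sigN_le_lamN_add N δ χ)))
  have hδ₀ := hδ.trans_le hδδ₀
  obtain ⟨x, hx⟩ := hN.exists_lamN_eq (hN.lamN_chiN_ne_top hne hδ₀)
  obtain ⟨y, hy⟩ := hN.exists_lamN_eq (hN.lamN_chiN_ne_top hne hδ)
  have hmin := (hN.lamN_chiN_add hne hδ₀).trans_le (sigN_le_lamN_add N δ₀ t)
  rw [← hN.lamN_chiN_add hne hδ]
  rw [hx, hy, ← EReal.coe_add, ← EReal.coe_add, EReal.coe_le_coe_iff] at hmin ⊢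
  have : (t : ℝ) ≤ χ := by exact_mod_cast htχ.le
  nlinarith [mul_nonneg (sub_nonneg.mpr hδδ₀) (sub_nonneg.mpr this)]

lemma le_sigN_of_slope_le (hN : PosConvex N) {s : ℕ} {ℓ ℓ₁ : ℝ} (hℓ : lamN N s = ℓ)
    (hℓ₁ : lamN N (s + 1) = ℓ₁) (hδ : ℓ - ℓ₁ ≤ δ) (hδ₀ : 0 ≤ δ) :
    ((ℓ + (ℓ - ℓ₁) * s : ℝ) : EReal) ≤ sigN N δ := by
  refine hN.le_sigN hδ₀ fun t => ?_
  have hline : ((ℓ + (ℓ - ℓ₁) * (s - t) : ℝ) : EReal) ≤ lamN N t := by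
    simpa using hN.le_lamN_of_slope hℓ hℓ₁ t
  calc ((ℓ + (ℓ - ℓ₁) * s : ℝ) : EReal)
      ≤ ((ℓ + (ℓ - ℓ₁) * (s - t) : ℝ) : EReal) + ((δ * t : ℝ) : EReal) := by
        rw [← EReal.coe_add, EReal.coe_le_coe_iff]
        nlinarith [mul_le_mul_of_nonneg_right hδ t.cast_nonneg]
    _ ≤ lamN N t + ((δ * t : ℝ) : EReal) := add_le_add hline le_rfl

lemma slope_lt_of_chiN_le (hN : PosConvex N) (hne : N.Nonempty) (hδ₀ : 0 < δ₀) {s : ℕ}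
    (hs : chiN N δ₀ ≤ s) {ℓ ℓ₁ : ℝ} (hℓ : lamN N s = ℓ) (hℓ₁ : lamN N (s + 1) = ℓ₁) :
    ℓ - ℓ₁ < δ₀ := by
  set χ := chiN N δ₀
  obtain ⟨x, hx⟩ := hN.exists_lamN_eq (hN.lamN_chiN_ne_top hne hδ₀)
  have hline := hN.le_lamN_of_slope hℓ hℓ₁ χ
  have hlt := hN.sigN_lt_of_chiN_lt hne hδ₀ (Nat.lt_succ_of_le hs)
  rw [← hN.lamN_chiN_add hne hδ₀, hx, Nat.cast_succ, hℓ₁, ← EReal.coe_add, ← EReal.coe_add,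
    EReal.coe_lt_coe_iff] at hlt
  rw [hx, EReal.coe_le_coe_iff] at hline
  push_cast at hline hlt
  have hpos : (0 : ℝ) < s + 1 - χ := by
    have : (χ : ℝ) ≤ s := by exact_mod_cast hs
    linarith
  by_contra! h
  nlinarith [mul_le_mul_of_nonneg_right h hpos.le]

lemma lamN_le_of_forall_sigN_le (hN : PosConvex N) (hne : N.Nonempty) (hδ₀ : 0 < δ₀) {s : ℕ}
    (hs : chiN N δ₀ ≤ s) {c : ℝ}
    (hc : ∀ δ, 0 < δ → δ ≤ δ₀ → sigN N δ ≤ ((c + δ * s : ℝ) : EReal)) : lamN N s ≤ c := by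
  have hfin : ∀ k : ℕ, chiN N δ₀ ≤ k → lamN N k ≠ ⊤ := fun k hk =>
    ne_top_of_le_ne_top (hN.lamN_chiN_ne_top hne hδ₀) (hN.lamN_antitone (by exact_mod_cast hk))
  obtain ⟨ℓ, hℓ⟩ := hN.exists_lamN_eq (hfin s hs)
  obtain ⟨ℓ₁, hℓ₁⟩ := hN.exists_lamN_eq (s := s + 1) (by exact_mod_cast hfin (s + 1) (by omega))
  set d := ℓ - ℓ₁
  have hd : 0 ≤ d := by
    have := hN.lamN_antitone (Int.le_add_one (le_refl (s : ℤ)))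
    rw [hℓ, hℓ₁, EReal.coe_le_coe_iff] at this
    linarith
  have hdδ₀ : d < δ₀ := hN.slope_lt_of_chiN_le hne hδ₀ hs hℓ hℓ₁
  have key : ∀ δ ∈ Set.Ioc d δ₀, ℓ ≤ c + (δ - d) * s := fun δ ⟨h₁, h₂⟩ => by
    have := (hN.le_sigN_of_slope_le hℓ hℓ₁ h₁.le (hd.trans h₁.le)).trans
      (hc δ (hd.trans_lt h₁) h₂)
    rw [EReal.coe_le_coe_iff] at this
    linarith
  have hlim : Tendsto (fun δ => c + (δ - d) * s) (𝓝[>] d) (𝓝 c) := by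
    have : Continuous fun δ : ℝ => c + (δ - d) * s := by fun_prop
    simpa using (this.tendsto d).mono_left nhdsWithin_le_nhds
  rw [hℓ, EReal.coe_le_coe_iff]
  exact ge_of_tendsto hlim (eventually_of_mem (Ioc_mem_nhdsGT hdδ₀) key)

lemma sigN_le_sigN_of_lamN_le (hN : PosConvex N) (hne : N.Nonempty) (hδ : 0 < δ)
    (hδδ₀ : δ ≤ δ₀) (hlam : ∀ s : ℕ, chiN N δ₀ ≤ s → lamN N' s ≤ lamN N s) :
    sigN N' δ ≤ sigN N δ :=
  calc sigN N' δ ≤ lamN N' (chiN N δ) + ((δ * chiN N δ : ℝ) : EReal) := sigN_le_lamN_add N' δ _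
    _ ≤ lamN N (chiN N δ) + ((δ * chiN N δ : ℝ) : EReal) :=
        add_le_add (hlam _ (hN.chiN_le_chiN hne hδ hδδ₀)) le_rfl
    _ = sigN N δ := hN.lamN_chiN_add hne hδ

lemma lamN_le_lamN_of_sigN_le (hN : PosConvex N) (hN' : PosConvex N') (hne : N.Nonempty)
    (hδ₀ : 0 < δ₀) (hsig : ∀ δ, 0 < δ → δ ≤ δ₀ → sigN N δ ≤ sigN N' δ) {s : ℕ}
    (hs : chiN N δ₀ ≤ s) : lamN N s ≤ lamN N' s := by
  rcases eq_or_ne (lamN N' s) ⊤ with h | h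
  · exact h ▸ le_top
  obtain ⟨c, hc⟩ := hN'.exists_lamN_eq h
  rw [hc]
  refine hN.lamN_le_of_forall_sigN_le hne hδ₀ hs fun δ h₁ h₂ => (hsig δ h₁ h₂).trans ?_
  rw [EReal.coe_add, ← hc]
  exact sigN_le_lamN_add N' δ s

lemma chiN_le_chiN_of_lamN_eq (hN : PosConvex N) (hN' : PosConvex N') (hne : N.Nonempty)
    (hne' : N'.Nonempty) (hδ₀ : 0 < δ₀) (hsig : sigN N δ₀ = sigN N' δ₀)
    (hlam : ∀ s : ℕ, chiN N δ₀ ≤ s → chiN N' δ₀ ≤ s → lamN N s = lamN N' s) :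
    chiN N' δ₀ ≤ chiN N δ₀ := by
  by_contra! h
  refine h.not_ge (hN.le_chiN hne hδ₀ ?_)
  rw [hlam _ h.le le_rfl, hN'.lamN_chiN_add hne' hδ₀, hsig]

end PosConvex

end critical

/-- for nonempty positively convex polygons `N, N'` and `δ₀ > 0`:
`ς_δ(N) = ς_δ(N')` for all `0 < δ ≤ δ₀` iff `χ_{δ₀}(N) = χ_{δ₀}(N')` and
`λ_N(s) = λ_{N'}(s)` for all `s ≥ χ_{δ₀}(N)`. -/
theorem statement12 (N N' : Set (ℝ × ℝ)) (hN : PosConvex N) (hN' : PosConvex N')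
    (hne : N.Nonempty) (hne' : N'.Nonempty) (δ₀ : ℝ) (hδ₀ : 0 < δ₀) :
    (∀ δ : ℝ, 0 < δ → δ ≤ δ₀ → sigN N δ = sigN N' δ) ↔
      (chiN N δ₀ = chiN N' δ₀ ∧
        ∀ s : ℕ, chiN N δ₀ ≤ s → lamN N (s : ℤ) = lamN N' (s : ℤ)) := by
  constructor
  · intro hsig
    have hlam : ∀ s : ℕ, chiN N δ₀ ≤ s → chiN N' δ₀ ≤ s → lamN N s = lamN N' s :=
      fun s hs hs' => le_antisymm
        (hN.lamN_le_lamN_of_sigN_le hN' hne hδ₀ (fun δ h₁ h₂ => (hsig δ h₁ h₂).le) hs)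
        (hN'.lamN_le_lamN_of_sigN_le hN hne' hδ₀ (fun δ h₁ h₂ => (hsig δ h₁ h₂).ge) hs')
    have hχ : chiN N δ₀ = chiN N' δ₀ := le_antisymm
      (hN'.chiN_le_chiN_of_lamN_eq hN hne' hne hδ₀ (hsig δ₀ hδ₀ le_rfl).symm
        fun s h' h => (hlam s h h').symm)
      (hN.chiN_le_chiN_of_lamN_eq hN' hne hne' hδ₀ (hsig δ₀ hδ₀ le_rfl) hlam)
    exact ⟨hχ, fun s hs => hlam s hs (hχ ▸ hs)⟩
  · rintro ⟨hχ, hlam⟩ δ hδ hδδ₀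
    exact le_antisymm
      (hN'.sigN_le_sigN_of_lamN_le hne' hδ hδδ₀ fun s hs => (hlam s (hχ ▸ hs)).le)
      (hN.sigN_le_sigN_of_lamN_le hne hδ hδδ₀ fun s hs => (hlam s hs).ge)
end
end

section
/- Monomial principalization: let w = (w_1,…,w_r) be positive real numbers, linearly independent over ℚ, and let A ⊆ ℤ_{≥0}^r be nonempty. A blow-up move for an ordered pair (i,j) with i ≠ j is allowed when w_i < w_j (for the current weights); it replaces w by w′ with w′_j = w_j − w_i and w′_k = w_k for k ≠ j, and it replaces every multi-index I by I′ with I′_i = I_i + I_j, I′_j = I_j and I′_k = I_k otherwise (so that Σ_k I′_k·w′_k = Σ_k I_k·w_k, and ℚ-linear independence of the weights is preserved). Let I₀ ∈ A be the unique element minimizing Σ_k I_k·w_k (the minimum exists since the set of these values is well-ordered). Then there is a finite sequence of allowed blow-up moves after which the transform of I₀ is componentwise ≤ the transform of every element of A (equivalently, the monomial x^{I₀′} divides x^{I′} for every I ∈ A). -/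
/-!
By Dickson's lemma every element of `A` lies above one of finitely many elements of `A`, and moves
act monotonically on multi-indices, so it suffices to handle finitely many `J ∈ A` one after
another. For a single `J`, moves act additively on `D = I₀ - J ∈ ℤ^r` and keep `∑ Dₖ wₖ ≤ 0`, as
well as positivity and ℚ-independence of the weights. While `D` has a positive entry, let `Dᵢ` be
its largest entry; some `Dⱼ` is negative. If `wᵢ < wⱼ` for such a `j`, the move `(i, j)` replaces
`Dᵢ` by `Dᵢ + Dⱼ < Dᵢ`, lowering the largest entry or the number of entries attaining it.
Otherwise independence gives `wⱼ < wᵢ`, and the move `(j, i)` replaces `Dⱼ` by `Dⱼ + Dᵢ`, which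
stays below the largest entry and shrinks the negative part of `D`. This lexicographic descent
ends with `D ≤ 0`.
-/

noncomputable section

/-- Effect of the blow-up move for the pair `(i,j)` on the weight vector:
`w'_j = w_j − w_i`, other weights unchanged. -/
def moveW {r : ℕ} (i j : Fin r) (w : Fin r → ℝ) : Fin r → ℝ :=
  Function.update w j (w j - w i)

/-- Effect of the blow-up move for the pair `(i,j)` on a multi-index:
`I'_i = I_i + I_j`, other entries unchanged. -/
def moveI {r : ℕ} (i j : Fin r) (I : Fin r → ℕ) : Fin r → ℕ :=
  Function.update I i (I i + I j)

/-- A chain of blow-up moves is allowed when each move `(i,j)` satisfies `wᵢ < wⱼ`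
for the current weights. -/
def AllowedChain {r : ℕ} : (Fin r → ℝ) → List (Fin r × Fin r) → Prop
  | _, [] => True
  | w, p :: L => w p.1 < w p.2 ∧ AllowedChain (moveW p.1 p.2 w) L

/-- The transform of a multi-index under a chain of moves. -/
def foldI {r : ℕ} (L : List (Fin r × Fin r)) (I : Fin r → ℕ) : Fin r → ℕ :=
  L.foldl (fun I p => moveI p.1 p.2 I) I

open Finset Function

section BlowUp

variable {r : ℕ}

def moveD (i j : Fin r) (D : Fin r → ℤ) : Fin r → ℤ :=
  update D i (D i + D j)

def foldD (L : List (Fin r × Fin r)) (D : Fin r → ℤ) : Fin r → ℤ :=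
  L.foldl (fun D p => moveD p.1 p.2 D) D

def foldW (L : List (Fin r × Fin r)) (w : Fin r → ℝ) : Fin r → ℝ :=
  L.foldl (fun w p => moveW p.1 p.2 w) w

lemma foldI_append (L₁ L₂ : List (Fin r × Fin r)) (I : Fin r → ℕ) :
    foldI (L₁ ++ L₂) I = foldI L₂ (foldI L₁ I) :=
  List.foldl_append

lemma foldD_append (L₁ L₂ : List (Fin r × Fin r)) (D : Fin r → ℤ) :
    foldD (L₁ ++ L₂) D = foldD L₂ (foldD L₁ D) :=
  List.foldl_append

lemma allowedChain_append {w : Fin r → ℝ} {L₁ L₂ : List (Fin r × Fin r)} :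
    AllowedChain w (L₁ ++ L₂) ↔ AllowedChain w L₁ ∧ AllowedChain (foldW L₁ w) L₂ := by
  induction L₁ generalizing w with
  | nil => simp [AllowedChain, foldW]
  | cons p L ih => simp [AllowedChain, ih, foldW, and_assoc]

lemma moveI_mono (i j : Fin r) : Monotone (moveI i j) := by
  intro I J h k
  rcases eq_or_ne k i with rfl | hki
  · simpa [moveI] using add_le_add (h k) (h j)
  · simpa [moveI, hki] using h k

lemma foldI_mono (L : List (Fin r × Fin r)) : Monotone (foldI L) := by
  induction L with
  | nil => exact monotone_id
  | cons p L ih => exact ih.comp (moveI_mono p.1 p.2)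

lemma moveD_natCast_sub (i j : Fin r) (I J : Fin r → ℕ) :
    moveD i j (fun k => (I k : ℤ) - J k) = fun k => (moveI i j I k : ℤ) - moveI i j J k := by
  ext k
  rcases eq_or_ne k i with rfl | hki
  · simp only [moveD, moveI, update_self]
    push_cast
    ring
  · simp [moveD, moveI, hki]

lemma foldD_natCast_sub (L : List (Fin r × Fin r)) (I J : Fin r → ℕ) :
    foldD L (fun k => (I k : ℤ) - J k) = fun k => (foldI L I k : ℤ) - foldI L J k := by
  induction L generalizing I J with
  | nil => rfl
  | cons p L ih => exact (congrArg (foldD L) (moveD_natCast_sub p.1 p.2 I J)).trans (ih _ _)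

lemma foldI_le_foldI_iff_foldD_nonpos (L : List (Fin r × Fin r)) (I J : Fin r → ℕ) :
    foldI L I ≤ foldI L J ↔ foldD L (fun k => (I k : ℤ) - J k) ≤ 0 := by
  simp [foldD_natCast_sub, Pi.le_def]

lemma moveW_pos {w : Fin r → ℝ} (hw : ∀ k, 0 < w k) {i j : Fin r} (hij : w i < w j) :
    ∀ k, 0 < moveW i j w k := by
  intro k
  rcases eq_or_ne k j with rfl | hkj
  · simpa [moveW] using hij
  · simpa [moveW, hkj] using hw k

lemma linearIndependent_moveW {w : Fin r → ℝ} (hw : LinearIndependent ℚ w) {i j : Fin r}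
    (hij : i ≠ j) : LinearIndependent ℚ (moveW i j w) := by
  have : moveW i j w = w + fun k => (Pi.single j (-1) : Fin r → ℚ) k • w i := by
    ext k
    rcases eq_or_ne k j with rfl | hkj
    · simp [moveW, sub_eq_add_neg]
    · simp [moveW, hkj]
  rw [this]
  exact (linearIndependent_add_smul_iff (by simp [hij])).2 hw

lemma sum_moveD_mul_moveW {i j : Fin r} (hij : i ≠ j) (D : Fin r → ℤ) (w : Fin r → ℝ) :
    ∑ k, (moveD i j D k : ℝ) * moveW i j w k = ∑ k, (D k : ℝ) * w k := by
  have key : ∀ k, (moveD i j D k : ℝ) * moveW i j w k =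
      D k * w k + ((if k = i then D j * w i else 0) - if k = j then D j * w i else 0) := by
    intro k
    rcases eq_or_ne k i with rfl | hki
    · simp only [moveD, moveW, update_self, update_of_ne hij, if_pos, if_neg hij]
      push_cast
      ring
    rcases eq_or_ne k j with rfl | hkj
    · simp only [moveD, moveW, update_self, update_of_ne hki, if_pos, if_neg hki]
      ring
    · simp [moveD, moveW, hki, hkj]
  simp [key, sum_add_distrib, sum_sub_distrib]

lemma AllowedChain.foldW_pos {w : Fin r → ℝ} {L : List (Fin r × Fin r)} (hL : AllowedChain w L)
    (hw : ∀ k, 0 < w k) : ∀ k, 0 < foldW L w k := by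
  induction L generalizing w with
  | nil => exact hw
  | cons p L ih => exact ih hL.2 (moveW_pos hw hL.1)

lemma AllowedChain.linearIndependent_foldW {w : Fin r → ℝ} {L : List (Fin r × Fin r)}
    (hL : AllowedChain w L) (hw : LinearIndependent ℚ w) : LinearIndependent ℚ (foldW L w) := by
  induction L generalizing w with
  | nil => exact hw
  | cons p L ih => exact ih hL.2 (linearIndependent_moveW hw (ne_of_apply_ne w hL.1.ne))

lemma AllowedChain.sum_foldD_mul_foldW {w : Fin r → ℝ} {L : List (Fin r × Fin r)}
    (hL : AllowedChain w L) (D : Fin r → ℤ) :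
    ∑ k, (foldD L D k : ℝ) * foldW L w k = ∑ k, (D k : ℝ) * w k := by
  induction L generalizing w D with
  | nil => rfl
  | cons p L ih =>
    exact (ih hL.2 _).trans (sum_moveD_mul_moveW (ne_of_apply_ne w hL.1.ne) D w)

end BlowUp

section Descent

variable {r : ℕ}

def maxPosPart (D : Fin r → ℤ) : ℕ := univ.sup fun k => (D k).toNat

def maxPosPartCount (D : Fin r → ℤ) : ℕ := #{k | (D k).toNat = maxPosPart D}

def negPartSum (D : Fin r → ℤ) : ℕ := ∑ k, (-D k).toNat

def descentMeasure (D : Fin r → ℤ) : ℕ × ℕ × ℕ :=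
  (maxPosPart D, maxPosPartCount D, negPartSum D)

variable {D : Fin r → ℤ} {i : Fin r}

lemma maxPosPart_eq_of_isMax (hmax : ∀ k, D k ≤ D i) : maxPosPart D = (D i).toNat :=
  le_antisymm (Finset.sup_le fun k _ => by have := hmax k; omega)
    (le_sup (f := fun k => (D k).toNat) (mem_univ i))

lemma descentMeasure_update_max_lt (hmax : ∀ k, D k ≤ D i) (hpos : 0 < D i) {v : ℤ}
    (hv : v < D i) :
    Prod.Lex (· < ·) (Prod.Lex (· < ·) (· < ·)) (descentMeasure (update D i v))
      (descentMeasure D) := by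
  have htop := maxPosPart_eq_of_isMax hmax
  have hle : maxPosPart (update D i v) ≤ maxPosPart D := by
    refine Finset.sup_le fun k _ => ?_
    rcases eq_or_ne k i with rfl | hki
    · rw [update_self]; omega
    · rw [update_of_ne hki, htop]; have := hmax k; omega
  rcases hle.lt_or_eq with hlt | heq
  · exact .left _ _ hlt
  rw [descentMeasure, descentMeasure, heq]
  refine .right _ (.left _ _ (card_lt_card ?_))
  have hi_drops : i ∉ filter (fun k => (update D i v k).toNat = maxPosPart D) univ := by
    simp only [htop, mem_filter, mem_univ, update_self, true_and]
    omega
  refine (ssubset_iff_of_subset fun k hk => ?_).2 ⟨i, by simp [htop], by rwa [heq]⟩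
  simp only [mem_filter, mem_univ, true_and, heq] at hk ⊢
  rcases eq_or_ne k i with rfl | hki
  · rw [update_self, htop] at hk; omega
  · simpa [hki] using hk

lemma descentMeasure_update_neg_lt (hmax : ∀ k, D k ≤ D i) (hpos : 0 < D i) {j : Fin r}
    (hj : D j < 0) {v : ℤ} (hjv : D j < v) (hv : v < D i) :
    Prod.Lex (· < ·) (Prod.Lex (· < ·) (· < ·)) (descentMeasure (update D j v))
      (descentMeasure D) := by
  have hji : j ≠ i := by rintro rfl; omega
  have htop : maxPosPart (update D j v) = maxPosPart D := by
    rw [maxPosPart_eq_of_isMax hmax, maxPosPart_eq_of_isMax (i := i) fun k => ?_]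
    · simp [hji.symm]
    rcases eq_or_ne k j with rfl | hkj
    · rw [update_self, update_of_ne hji.symm]; omega
    · simpa [hkj, hji.symm] using hmax k
  have hcount : maxPosPartCount (update D j v) = maxPosPartCount D := by
    rw [maxPosPartCount, maxPosPartCount, htop, maxPosPart_eq_of_isMax hmax]
    congr 1
    refine filter_congr fun k _ => ?_
    rcases eq_or_ne k j with rfl | hkj
    · rw [update_self]; omega
    · simp [hkj]
  have hneg : negPartSum (update D j v) < negPartSum D := by
    refine sum_lt_sum (fun k _ => ?_) ⟨j, mem_univ j, by rw [update_self]; omega⟩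
    rcases eq_or_ne k j with rfl | hkj
    · rw [update_self]; omega
    · simp [hkj]
  rw [descentMeasure, descentMeasure, htop, hcount]
  exact .right _ (.right _ hneg)

end Descent

section Principalization

variable {r : ℕ}

theorem exists_allowedChain_foldD_nonpos (w : Fin r → ℝ) (hw : ∀ k, 0 < w k)
    (hind : LinearIndependent ℚ w) (D : Fin r → ℤ) (hD : ∑ k, (D k : ℝ) * w k ≤ 0) :
    ∃ L, AllowedChain w L ∧ foldD L D ≤ 0 := by
  by_cases hdone : D ≤ 0
  · exact ⟨[], trivial, hdone⟩
  obtain ⟨k, hk⟩ : ∃ k, 0 < D k := by simpa [Pi.le_def] using hdone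
  have : Nonempty (Fin r) := ⟨k⟩
  obtain ⟨i, hmax⟩ := Finite.exists_max D
  have hpos : 0 < D i := hk.trans_le (hmax k)
  have hneg : ∃ j, D j < 0 := by
    by_contra! h
    have : 0 < ∑ k, (D k : ℝ) * w k :=
      sum_pos' (fun k _ => mul_nonneg (by exact_mod_cast h k) (hw k).le)
        ⟨i, mem_univ i, mul_pos (by exact_mod_cast hpos) (hw i)⟩
    linarith
  by_cases hup : ∃ j, D j < 0 ∧ w i < w j
  · obtain ⟨j, hj, hwij⟩ := hup
    have hij : i ≠ j := ne_of_apply_ne w hwij.ne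
    obtain ⟨L, hL, hLD⟩ := exists_allowedChain_foldD_nonpos (moveW i j w) (moveW_pos hw hwij)
      (linearIndependent_moveW hind hij) (moveD i j D) (by rwa [sum_moveD_mul_moveW hij])
    exact ⟨(i, j) :: L, ⟨hwij, hL⟩, hLD⟩
  · push Not at hup
    obtain ⟨j, hj⟩ := hneg
    have hji : j ≠ i := by rintro rfl; omega
    have hwji : w j < w i := (hup j hj).lt_of_ne (hind.injective.ne hji)
    obtain ⟨L, hL, hLD⟩ := exists_allowedChain_foldD_nonpos (moveW j i w) (moveW_pos hw hwji)
      (linearIndependent_moveW hind hji) (moveD j i D) (by rwa [sum_moveD_mul_moveW hji])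
    exact ⟨(j, i) :: L, ⟨hwji, hL⟩, hLD⟩
termination_by descentMeasure D
decreasing_by
  · exact descentMeasure_update_max_lt hmax hpos (by omega)
  · exact descentMeasure_update_neg_lt hmax hpos hj (by omega) (by omega)

theorem exists_allowedChain_forall_foldI_le (w : Fin r → ℝ) (hw : ∀ k, 0 < w k)
    (hind : LinearIndependent ℚ w) (I₀ : Fin r → ℕ) (B : Finset (Fin r → ℕ))
    (hB : ∀ J ∈ B, ∑ k, (I₀ k : ℝ) * w k ≤ ∑ k, (J k : ℝ) * w k) :
    ∃ L, AllowedChain w L ∧ ∀ J ∈ B, foldI L I₀ ≤ foldI L J := by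
  classical
  induction B using Finset.induction_on with
  | empty => exact ⟨[], trivial, by simp⟩
  | insert J B _ ih =>
    obtain ⟨L₁, hL₁, hB₁⟩ := ih fun K hK => hB K (mem_insert_of_mem hK)
    have hD : ∑ k, (foldD L₁ (fun k => (I₀ k : ℤ) - J k) k : ℝ) * foldW L₁ w k ≤ 0 := by
      rw [hL₁.sum_foldD_mul_foldW]
      push_cast
      simpa [sub_mul] using hB J (mem_insert_self J B)
    obtain ⟨L₂, hL₂, hJ₂⟩ := exists_allowedChain_foldD_nonpos _ (hL₁.foldW_pos hw)
      (hL₁.linearIndependent_foldW hind) _ hD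
    refine ⟨L₁ ++ L₂, allowedChain_append.2 ⟨hL₁, hL₂⟩, fun K hK => ?_⟩
    rcases mem_insert.1 hK with rfl | hK
    · rwa [foldI_le_foldI_iff_foldD_nonpos, foldD_append]
    · rw [foldI_append, foldI_append]
      exact foldI_mono L₂ (hB₁ K hK)

end Principalization

lemma exists_finset_subset_forall_exists_le {α : Type*} [PartialOrder α] [WellQuasiOrderedLE α]
    (A : Set α) : ∃ B : Finset α, ↑B ⊆ A ∧ ∀ a ∈ A, ∃ b ∈ B, b ≤ a := by
  have hfin : {x | Minimal (· ∈ A) x}.Finite :=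
    WellQuasiOrderedLE.finite_of_isAntichain (setOfPred_minimal_antichain _)
  refine ⟨hfin.toFinset, fun b hb => (hfin.mem_toFinset.1 hb).prop, fun a ha => ?_⟩
  obtain ⟨b, hba, hb⟩ := (Set.isPWO_of_wellQuasiOrderedLE A).exists_le_minimal ha
  exact ⟨b, hfin.mem_toFinset.2 hb, hba⟩

theorem statement15_general {r : ℕ} (w : Fin r → ℝ) (hw : ∀ i, 0 < w i)
    (hind : LinearIndependent ℚ w) (A : Set (Fin r → ℕ))
    (I₀ : Fin r → ℕ)
    (hmin : ∀ I ∈ A, (∑ i, (I₀ i : ℝ) * w i) ≤ ∑ i, (I i : ℝ) * w i) :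
    ∃ L : List (Fin r × Fin r), AllowedChain w L ∧
      ∀ I ∈ A, ∀ idx : Fin r, foldI L I₀ idx ≤ foldI L I idx := by
  obtain ⟨B, hBA, hBcover⟩ := exists_finset_subset_forall_exists_le A
  obtain ⟨L, hL, hLB⟩ :=
    exists_allowedChain_forall_foldI_le w hw hind I₀ B fun J hJ => hmin J (hBA hJ)
  refine ⟨L, hL, fun I hI => ?_⟩
  obtain ⟨J, hJB, hJI⟩ := hBcover I hI
  exact (hLB J hJB).trans (foldI_mono L hJI)

/-- monomial principalization: after finitely many allowed blow-up
moves, the transform of the minimizing multi-index `I₀` divides (componentwise) the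
transform of every element of `A`. -/
theorem statement15 {r : ℕ} (hr : 0 < r) (w : Fin r → ℝ) (hw : ∀ i, 0 < w i)
    (hind : LinearIndependent ℚ w) (A : Set (Fin r → ℕ)) (hA : A.Nonempty)
    (I₀ : Fin r → ℕ) (hI₀ : I₀ ∈ A)
    (hmin : ∀ I ∈ A, (∑ i, (I₀ i : ℝ) * w i) ≤ ∑ i, (I i : ℝ) * w i) :
    ∃ L : List (Fin r × Fin r), AllowedChain w L ∧
      ∀ I ∈ A, ∀ idx : Fin r, foldI L I₀ idx ≤ foldI L I idx :=
  statement15_general w hw hind A I₀ hmin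
end
end

section
/- Assume ω ≠ 0 and fix γ ∈ ℝ. Define: a level ω_s is ρ-dominant if ν_A(z·ω_s) ≤ ρ and both η_s and h_s are ν_A(z·ω_s)-final; ρ-recessive if ν_A(z·ω_s) > ρ; ρ-final if either holds. Set ς = min_s(ν_A(z·ω_s) + sδ), Cl = {(ν_A(z·ω_s), s) : s ≥ 0}, Cl^γ = {(ν_A(z·ω_s), s) : ω_s is (γ − sδ)-dominant}, ς^γ = min{a + sδ : (a,s) ∈ Cl^γ} (with ς^γ = ∞ if Cl^γ = ∅), and L = {(a,b) : a + bδ = ς}. Say ω is γ-prepared if every level ω_s is (min{γ,ς} − sδ)-final. Then ω is γ-prepared if and only if either ς > γ, or both ς = ς^γ and L ∩ Cl = L ∩ Cl^γ. Moreover, in the latter case every level with ν_A(z·ω_s) + sδ = ς is (γ − sδ)-dominant; in particular the critical vertex (ς − χδ, χ), with χ = max{s : ν_A(z·ω_s) + sδ = ς}, corresponds to a dominant level. -/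
noncomputable section
open MvPowerSeries Classical

/-- `f` is `ρ`-final (dominant or recessive), for an extended-real bound `ρ`. -/
def FinFnAt {k : Type} [Field k] {σ : Type} (W : σ → ℝ) (isX : σ → Prop) (ρ : EReal)
    (f : MvPowerSeries σ k) : Prop :=
  ρ < nuG W f ∨ (nuG W f ≤ ρ ∧ DomAtG W isX f)

/-- A 1-form is `ρ`-final (dominant or recessive), for an extended-real bound `ρ`. -/
def Fin1At {k : Type} [Field k] {σ : Type} (W : σ → ℝ) (isX : σ → Prop) (ρ : EReal)
    (η : σ → MvPowerSeries σ k) : Prop :=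
  ρ < nu1G W η ∨ (nu1G W η ≤ ρ ∧ Dom1AtG W isX η)

/-- `ν_A(z·ω_s) = min{ν_A(η_s), ν_A(h_s)}`. -/
def levVal {k : Type} [Field k] {r l : ℕ} (w : Fin r → ℝ)
    (eta : ℕ → Idx r l → MvPowerSeries (Idx r l) k)
    (h : ℕ → MvPowerSeries (Idx r l) k) (s : ℕ) : EReal :=
  min (nu1G (Sum.elim w fun _ => (0:ℝ)) (eta s)) (nuG (Sum.elim w fun _ => (0:ℝ)) (h s))

/-- The critical value `ς = min_s (ν_A(z·ω_s) + sδ)`. -/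
def sigLev {k : Type} [Field k] {r l : ℕ} (w : Fin r → ℝ)
    (eta : ℕ → Idx r l → MvPowerSeries (Idx r l) k)
    (h : ℕ → MvPowerSeries (Idx r l) k) (δ : ℝ) : EReal :=
  ⨅ s : ℕ, (levVal w eta h s + ((s * δ : ℝ) : EReal))

/-- The level `ω_s` is `ρ`-dominant: `ν_A(z·ω_s) ≤ ρ` and both `η_s` and `h_s`
are `ν_A(z·ω_s)`-final. -/
def DomLevel {k : Type} [Field k] {r l : ℕ} (w : Fin r → ℝ)
    (eta : ℕ → Idx r l → MvPowerSeries (Idx r l) k)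
    (h : ℕ → MvPowerSeries (Idx r l) k) (s : ℕ) (ρ : EReal) : Prop :=
  levVal w eta h s ≤ ρ ∧
  Fin1At (Sum.elim w fun _ => (0:ℝ)) (fun t => t.isLeft = true) (levVal w eta h s) (eta s) ∧
  FinFnAt (Sum.elim w fun _ => (0:ℝ)) (fun t => t.isLeft = true) (levVal w eta h s) (h s)

/-- The level `ω_s` is `ρ`-final: `ρ`-dominant or `ρ`-recessive. -/
def FinLevel {k : Type} [Field k] {r l : ℕ} (w : Fin r → ℝ)
    (eta : ℕ → Idx r l → MvPowerSeries (Idx r l) k)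
    (h : ℕ → MvPowerSeries (Idx r l) k) (s : ℕ) (ρ : EReal) : Prop :=
  DomLevel w eta h s ρ ∨ ρ < levVal w eta h s

/-- `ω` is `γ`-prepared: every level `ω_s` is `(min{γ,ς} − sδ)`-final. -/
def Prepared {k : Type} [Field k] {r l : ℕ} (w : Fin r → ℝ)
    (eta : ℕ → Idx r l → MvPowerSeries (Idx r l) k)
    (h : ℕ → MvPowerSeries (Idx r l) k) (δ γ : ℝ) : Prop :=
  ∀ s : ℕ, FinLevel w eta h s
    (min ((γ : ℝ) : EReal) (sigLev w eta h δ) - ((s * δ : ℝ) : EReal))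

/-- The `γ`-dominant critical value `ς^γ` (`∞` if no level is `(γ−sδ)`-dominant). -/
def sigGam {k : Type} [Field k] {r l : ℕ} (w : Fin r → ℝ)
    (eta : ℕ → Idx r l → MvPowerSeries (Idx r l) k)
    (h : ℕ → MvPowerSeries (Idx r l) k) (δ γ : ℝ) : EReal :=
  ⨅ s : ℕ, if DomLevel w eta h s (((γ - s * δ : ℝ)) : EReal)
    then levVal w eta h s + ((s * δ : ℝ) : EReal) else ⊤

/- Preparedness only constrains the levels lying on the critical segment `L`: a level strictly
above `L` is automatically recessive for `min{γ,ς} − sδ`, and if `γ < ς` every level is. On `L`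
the level cannot be recessive, so it must be dominant, and for such a level `(ς − sδ)`- and
`(γ − sδ)`-dominance coincide. The identity `ς = ς^γ` then only needs `ς` to be attained, which
holds because `ν_A(z·ω_s) + sδ ≥ sδ → ∞`. -/

open Filter

lemma EReal.le_sub_coe_iff {a c : EReal} {b : ℝ} : a ≤ c - b ↔ a + b ≤ c :=
  EReal.le_sub_iff_add_le (.inl (EReal.coe_ne_bot b)) (.inl (EReal.coe_ne_top b))

lemma EReal.sub_coe_lt_iff {a c : EReal} {b : ℝ} : c - b < a ↔ c < a + b :=
  EReal.sub_lt_iff (.inl (EReal.coe_ne_bot b)) (.inl (EReal.coe_ne_top b))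

lemma EReal.exists_eq_iInf_of_tendsto_top {T : ℕ → EReal} (hT : Tendsto T atTop (nhds ⊤))
    (hfin : ⨅ s, T s < ⊤) : ∃ s, T s = ⨅ s, T s := by
  obtain ⟨s₀, hs₀⟩ := iInf_lt_iff.1 hfin
  obtain ⟨N, hN⟩ := eventually_atTop.1 (hT.eventually (Ioi_mem_nhds hs₀))
  have hs₀N : s₀ ∈ Finset.range N :=
    Finset.mem_range.2 (lt_of_not_ge fun hle => lt_irrefl _ (hN s₀ hle))
  obtain ⟨m, -, hm⟩ := (Finset.range N).exists_min_image T ⟨s₀, hs₀N⟩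
  refine ⟨m, le_antisymm (le_iInf fun s => ?_) (iInf_le T m)⟩
  by_cases hs : s < N
  · exact hm s (Finset.mem_range.2 hs)
  · exact (hm s₀ hs₀N).trans (hN s (not_lt.1 hs)).le

lemma nuG_nonneg {k : Type} [Field k] {σ : Type} {W : σ → ℝ} (hW : ∀ i, 0 ≤ W i)
    (f : MvPowerSeries σ k) : 0 ≤ nuG W f :=
  le_sInf fun _ ⟨_, _, hv⟩ =>
    hv ▸ EReal.coe_nonneg.2 (Finsupp.sum_nonneg fun i _ => mul_nonneg (Nat.cast_nonneg _) (hW i))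

section Levels

variable {k : Type} [Field k] {r l : ℕ} {w : Fin r → ℝ}
  {eta : ℕ → Idx r l → MvPowerSeries (Idx r l) k} {h : ℕ → MvPowerSeries (Idx r l) k}
  {δ γ : ℝ}

lemma levVal_nonneg (hw : ∀ i, 0 ≤ w i) (s : ℕ) : 0 ≤ levVal w eta h s := by
  have hW : ∀ i, 0 ≤ Sum.elim w (fun _ : Fin l => (0 : ℝ)) i := by
    rintro (i | j)
    exacts [hw i, le_rfl]
  exact le_min (le_iInf fun _ => nuG_nonneg hW _) (nuG_nonneg hW _)

lemma sigLev_le (s : ℕ) : sigLev w eta h δ ≤ levVal w eta h s + ((s * δ : ℝ) : EReal) :=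
  iInf_le (fun s : ℕ => levVal w eta h s + ((s * δ : ℝ) : EReal)) s

lemma tendsto_levVal_add_nhds_top (hw : ∀ i, 0 ≤ w i) (hδ : 0 < δ) :
    Tendsto (fun s : ℕ => levVal w eta h s + ((s * δ : ℝ) : EReal)) atTop (nhds ⊤) := by
  refine EReal.tendsto_nhds_top_iff_real.2 fun x => ?_
  obtain ⟨N, hN⟩ := exists_nat_gt (x / δ)
  refine eventually_atTop.2 ⟨N, fun s hs => ?_⟩
  have hx : x < s * δ := by
    rw [div_lt_iff₀ hδ] at hN
    exact hN.trans_le (mul_le_mul_of_nonneg_right (Nat.cast_le.2 hs) hδ.le)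
  exact (EReal.coe_lt_coe_iff.2 hx).trans_le (le_add_of_nonneg_left (levVal_nonneg hw s))

lemma exists_levVal_add_eq_sigLev (hw : ∀ i, 0 ≤ w i) (hδ : 0 < δ)
    (hfin : sigLev w eta h δ < ⊤) :
    ∃ s : ℕ, levVal w eta h s + ((s * δ : ℝ) : EReal) = sigLev w eta h δ :=
  EReal.exists_eq_iInf_of_tendsto_top (tendsto_levVal_add_nhds_top hw hδ) hfin

lemma DomLevel.of_levVal_le {s : ℕ} {ρ ρ' : EReal} (hd : DomLevel w eta h s ρ)
    (hle : levVal w eta h s ≤ ρ') : DomLevel w eta h s ρ' :=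
  ⟨hle, hd.2⟩

lemma prepared_of_lt_sigLev (hγ : (γ : EReal) < sigLev w eta h δ) : Prepared w eta h δ γ :=
  fun s => .inr <| by
    rw [min_eq_left hγ.le, EReal.sub_coe_lt_iff]
    exact hγ.trans_le (sigLev_le s)

lemma prepared_iff_of_sigLev_le (hγ : sigLev w eta h δ ≤ γ) :
    Prepared w eta h δ γ ↔ ∀ s : ℕ, levVal w eta h s + ((s * δ : ℝ) : EReal) = sigLev w eta h δ →
      DomLevel w eta h s (((γ - s * δ : ℝ)) : EReal) := by
  simp only [Prepared, FinLevel, min_eq_right hγ, EReal.sub_coe_lt_iff, EReal.coe_sub]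
  refine ⟨fun hp s hs => ?_, fun hcrit s => ?_⟩
  · rcases hp s with hd | hrec
    · exact hd.of_levVal_le (EReal.le_sub_coe_iff.2 (hs.trans_le hγ))
    · exact absurd (hs ▸ hrec) (lt_irrefl _)
  · by_cases hs : levVal w eta h s + ((s * δ : ℝ) : EReal) = sigLev w eta h δ
    · exact .inl ((hcrit s hs).of_levVal_le (EReal.le_sub_coe_iff.2 hs.le))
    · exact .inr ((sigLev_le s).lt_of_ne (Ne.symm hs))

lemma prepared_iff :
    Prepared w eta h δ γ ↔ (γ : EReal) < sigLev w eta h δ ∨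
      ∀ s : ℕ, levVal w eta h s + ((s * δ : ℝ) : EReal) = sigLev w eta h δ →
        DomLevel w eta h s (((γ - s * δ : ℝ)) : EReal) := by
  by_cases hγ : (γ : EReal) < sigLev w eta h δ
  · exact iff_of_true (prepared_of_lt_sigLev hγ) (.inl hγ)
  · rw [prepared_iff_of_sigLev_le (not_lt.1 hγ), or_iff_right hγ]

lemma sigLev_eq_sigGam (hw : ∀ i, 0 ≤ w i) (hδ : 0 < δ) (hγ : sigLev w eta h δ ≤ γ)
    (hcrit : ∀ s : ℕ, levVal w eta h s + ((s * δ : ℝ) : EReal) = sigLev w eta h δ →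
      DomLevel w eta h s (((γ - s * δ : ℝ)) : EReal)) :
    sigLev w eta h δ = sigGam w eta h δ γ := by
  obtain ⟨s₀, hs₀⟩ :=
    exists_levVal_add_eq_sigLev hw hδ (hγ.trans_lt (EReal.coe_lt_top γ))
  refine le_antisymm (le_iInf fun s => ?_) ?_
  · split_ifs
    exacts [sigLev_le s, le_top]
  · calc sigGam w eta h δ γ ≤ levVal w eta h s₀ + ((s₀ * δ : ℝ) : EReal) := by
          refine (iInf_le _ s₀).trans_eq ?_
          exact if_pos (hcrit s₀ hs₀)
      _ = sigLev w eta h δ := hs₀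

end Levels

theorem statement17_general {k : Type} [Field k] {r l : ℕ}
    (w : Fin r → ℝ) (hw : ∀ i, 0 < w i)
    (eta : ℕ → Idx r l → MvPowerSeries (Idx r l) k)
    (h : ℕ → MvPowerSeries (Idx r l) k)
    (δ γ : ℝ) (hδ : 0 < δ) :
    (Prepared w eta h δ γ ↔
      (((γ : ℝ) : EReal) < sigLev w eta h δ ∨
        (sigLev w eta h δ = sigGam w eta h δ γ ∧
          ∀ s : ℕ, levVal w eta h s + ((s * δ : ℝ) : EReal) = sigLev w eta h δ →
            DomLevel w eta h s (((γ - s * δ : ℝ)) : EReal)))) ∧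
    (Prepared w eta h δ γ → ¬ ((γ : ℝ) : EReal) < sigLev w eta h δ →
      (∀ s : ℕ, levVal w eta h s + ((s * δ : ℝ) : EReal) = sigLev w eta h δ →
        DomLevel w eta h s (((γ - s * δ : ℝ)) : EReal)) ∧
      (∀ χ : ℕ,
        (levVal w eta h χ + ((χ * δ : ℝ) : EReal) = sigLev w eta h δ ∧
          ∀ s : ℕ, levVal w eta h s + ((s * δ : ℝ) : EReal) = sigLev w eta h δ → s ≤ χ) →
        DomLevel w eta h χ (((γ - χ * δ : ℝ)) : EReal))) := by
  have hw' : ∀ i, 0 ≤ w i := fun i => (hw i).le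
  rw [prepared_iff]
  refine ⟨⟨fun hp => ?_, fun hp => hp.imp_right And.right⟩, fun hp hγ => ?_⟩
  · by_cases hγ : (γ : EReal) < sigLev w eta h δ
    · exact .inl hγ
    · have hcrit := hp.resolve_left hγ
      exact .inr ⟨sigLev_eq_sigGam hw' hδ (not_lt.1 hγ) hcrit, hcrit⟩
  · have hcrit := hp.resolve_left hγ
    exact ⟨hcrit, fun χ hχ => hcrit χ hχ.1⟩

/-- characterization of `γ`-preparedness, and dominance of the levels on
the critical segment (in particular of the critical vertex). -/
theorem statement17 {k : Type} [Field k] [CharZero k] {r l : ℕ} (hr : 0 < r)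
    (w : Fin r → ℝ) (hw : ∀ i, 0 < w i) (hind : LinearIndependent ℚ w)
    (eta : ℕ → Idx r l → MvPowerSeries (Idx r l) k)
    (h : ℕ → MvPowerSeries (Idx r l) k) (hh0 : h 0 = 0)
    (hω : ∃ s, (∃ b, eta s b ≠ 0) ∨ h s ≠ 0)
    (δ γ : ℝ) (hδ : 0 < δ) :
    (Prepared w eta h δ γ ↔
      (((γ : ℝ) : EReal) < sigLev w eta h δ ∨
        (sigLev w eta h δ = sigGam w eta h δ γ ∧
          ∀ s : ℕ, levVal w eta h s + ((s * δ : ℝ) : EReal) = sigLev w eta h δ →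
            DomLevel w eta h s (((γ - s * δ : ℝ)) : EReal)))) ∧
    (Prepared w eta h δ γ → ¬ ((γ : ℝ) : EReal) < sigLev w eta h δ →
      (∀ s : ℕ, levVal w eta h s + ((s * δ : ℝ) : EReal) = sigLev w eta h δ →
        DomLevel w eta h s (((γ - s * δ : ℝ)) : EReal)) ∧
      (∀ χ : ℕ,
        (levVal w eta h χ + ((χ * δ : ℝ) : EReal) = sigLev w eta h δ ∧
          ∀ s : ℕ, levVal w eta h s + ((s * δ : ℝ) : EReal) = sigLev w eta h δ → s ≤ χ) →
        DomLevel w eta h χ (((γ - χ * δ : ℝ)) : EReal))) :=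
  statement17_general w hw eta h δ γ hδ
end
end
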